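/- arXiv:1411.2319 — 16 statements merged into one kernel-verified Lean document; each statement's English description precedes it below -/
import Mathlib

section
/- Let n ≥ 2 be an integer, r₀ > 0, and let φ : [r₀,∞) → ℝ be differentiable and satisfy the translator profile ODE φ'(r) = (1+φ(r)²)(1 − (n−1)φ(r)/r) for all r ≥ r₀. Then for every r ≥ r₀, writing E(r) = exp(−(n−1)∫_{r₀}^{r} (1+φ(s)²)/s ds), one has the upper bound φ(r) ≤ (r/(n−1))·(1 − E(r)) + φ(r₀)·E(r). -/
/-!
With `c = n - 1` and `p(x) = c (1 + φ(x)²) / x`, the ODE reads `φ' = -p · (φ - x / c)`. For a fixed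
`r ≥ r₀` and `x ≤ r` this gives the linear differential inequality `u' ≤ -p u` for
`u = φ - r / c`, and the integrating factor `exp (∫ p)` turns it into `u(r) ≤ u(r₀) E(r)`,
which is the claimed bound.
-/

open Set Real

theorem le_mul_exp_sub_of_hasDerivAt_le_neg_mul {u u' P p : ℝ → ℝ} {a b : ℝ} (hab : a ≤ b)
    (hu : ContinuousOn u (Icc a b)) (hP : ContinuousOn P (Icc a b))
    (hu' : ∀ x ∈ Ioo a b, HasDerivAt u (u' x) x) (hP' : ∀ x ∈ Ioo a b, HasDerivAt P (p x) x)
    (hle : ∀ x ∈ Ioo a b, u' x ≤ -(p x * u x)) :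
    u b ≤ u a * exp (P a - P b) := by
  have hanti : AntitoneOn (fun x => u x * exp (P x)) (Icc a b) := by
    refine antitoneOn_of_hasDerivWithinAt_nonpos (convex_Icc a b) (hu.mul hP.rexp)
      (f' := fun x => (u' x + p x * u x) * exp (P x)) (fun x hx => ?_) (fun x hx => ?_)
    all_goals rw [interior_Icc] at hx
    · exact (((hu' x hx).mul (hP' x hx).exp).congr_deriv (by ring)).hasDerivWithinAt
    · exact mul_nonpos_of_nonpos_of_nonneg (by linarith [hle x hx]) (exp_pos _).le
  rw [exp_sub, mul_div_assoc', le_div_iff₀ (exp_pos _)]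
  exact hanti ⟨le_rfl, hab⟩ ⟨hab, le_rfl⟩ hab

theorem hasDerivAt_integral_of_continuousOn_Ici {f : ℝ → ℝ} {a x : ℝ}
    (hf : ContinuousOn f (Ici a)) (hx : a < x) :
    HasDerivAt (fun u => ∫ t in a..u, f t) (f x) x :=
  intervalIntegral.integral_hasDerivAt_right
    ((hf.mono Icc_subset_Ici_self).intervalIntegrable_of_Icc hx.le)
    ((hf.mono Ioi_subset_Ici_self).stronglyMeasurableAtFilter isOpen_Ioi x hx)
    (hf.continuousAt (Ici_mem_nhds hx))

theorem continuousOn_integral_Icc_of_continuousOn_Ici {f : ℝ → ℝ} {a b : ℝ} (hab : a ≤ b)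
    (hf : ContinuousOn f (Ici a)) :
    ContinuousOn (fun u => ∫ t in a..u, f t) (Icc a b) := by
  rw [← uIcc_of_le hab]
  exact intervalIntegral.continuousOn_primitive_interval'
    ((hf.mono Icc_subset_Ici_self).intervalIntegrable_of_Icc hab) left_mem_uIcc

theorem translator_profile_le {c r₀ : ℝ} (hc : 0 < c) (hr₀ : 0 < r₀) {φ : ℝ → ℝ}
    (hode : ∀ r, r₀ ≤ r → HasDerivAt φ ((1 + φ r ^ 2) * (1 - c * φ r / r)) r)
    {r : ℝ} (hr : r₀ ≤ r) :
    φ r ≤ r / c * (1 - exp (-c * ∫ s in r₀..r, (1 + φ s ^ 2) / s))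
      + φ r₀ * exp (-c * ∫ s in r₀..r, (1 + φ s ^ 2) / s) := by
  have hφ : ContinuousOn φ (Ici r₀) := fun x hx => (hode x hx).continuousAt.continuousWithinAt
  have hf : ContinuousOn (fun s => (1 + φ s ^ 2) / s) (Ici r₀) :=
    (continuousOn_const.add (hφ.pow 2)).div continuousOn_id
      fun x hx => (hr₀.trans_le hx).ne'
  have hineq : ∀ x ∈ Ioo r₀ r,
      (1 + φ x ^ 2) * (1 - c * φ x / x) ≤ -(c * ((1 + φ x ^ 2) / x) * (φ x - r / c)) := by
    intro x ⟨hx₀, hxr⟩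
    have hx : 0 < x := hr₀.trans hx₀
    rw [show -(c * ((1 + φ x ^ 2) / x) * (φ x - r / c)) = (1 + φ x ^ 2) * ((r - c * φ x) / x) by
      field_simp; ring]
    gcongr
    rw [one_sub_div hx.ne']
    gcongr
  have key := le_mul_exp_sub_of_hasDerivAt_le_neg_mul (u := fun x => φ x - r / c)
    (P := fun x => c * ∫ s in r₀..x, (1 + φ s ^ 2) / s) hr
    ((hφ.mono Icc_subset_Ici_self).sub continuousOn_const)
    ((continuousOn_integral_Icc_of_continuousOn_Ici hr hf).const_smul c)
    (fun x hx => (hode x hx.1.le).sub_const _)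
    (fun x hx => (hasDerivAt_integral_of_continuousOn_Ici hf hx.1).const_mul c) hineq
  simp only [intervalIntegral.integral_same, mul_zero, zero_sub, ← neg_mul] at key
  linarith

/-- **Upper bound from monotonicity for the translator profile ODE.**
If `φ` solves `φ'(r) = (1+φ(r)²)(1 − (n−1)φ(r)/r)` on `[r₀, ∞)` with `r₀ > 0`, then,
with `E(r) = e^{−(n−1)∫_{r₀}^r (1+φ(s)²)/s ds}`, one has
`φ(r) ≤ (r/(n−1))(1 − E(r)) + φ(r₀) E(r)` for all `r ≥ r₀`. -/
theorem translator_profile_upper_bound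
    (n : ℕ) (hn : 2 ≤ n) (r₀ : ℝ) (hr₀ : 0 < r₀) (φ : ℝ → ℝ)
    (hode : ∀ r, r₀ ≤ r →
      HasDerivAt φ ((1 + φ r ^ 2) * (1 - ((n : ℝ) - 1) * φ r / r)) r) :
    ∀ r, r₀ ≤ r →
      φ r ≤ (r / ((n : ℝ) - 1)) *
              (1 - Real.exp (-((n : ℝ) - 1) * ∫ s in r₀..r, (1 + φ s ^ 2) / s))
            + φ r₀ * Real.exp (-((n : ℝ) - 1) * ∫ s in r₀..r, (1 + φ s ^ 2) / s) := by
  have hc : (0 : ℝ) < n - 1 := by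
    have : (2 : ℝ) ≤ n := by exact_mod_cast hn
    linarith
  exact fun r hr => translator_profile_le hc hr₀ hode hr
end

section
/- Let n ≥ 2 be an integer, r₀ > 0, and let φ : [r₀,∞) → ℝ be differentiable and satisfy the translator profile ODE φ'(r) = (1+φ(r)²)(1 − (n−1)φ(r)/r) for all r ≥ r₀. If φ(r₀) ≤ 0, then for all r ∈ [r₀,∞): φ(r₀) ≤ φ(r) ≤ r/(n−1), and φ'(r) ≥ 0. -/
/-!
The line `φ = r/(n-1)` is a barrier: wherever a solution touches it, the right-hand side of the
ODE vanishes while the line has slope `1/(n-1) > 0`, so a solution starting below the line stays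
below it (Mathlib's fencing theorem `image_le_of_deriv_right_lt_deriv_boundary`). Below the line
the right-hand side is nonnegative, so `φ` is nondecreasing.
-/

open Set

lemma translator_rhs_nonneg_of_le_div {k r y : ℝ} (hk : 0 < k) (hr : 0 < r) (hy : y ≤ r / k) :
    0 ≤ (1 + y ^ 2) * (1 - k * y / r) := by
  have hky : k * y ≤ r := (le_div_iff₀' hk).mp hy
  have : k * y / r ≤ 1 := (div_le_one hr).mpr hky
  exact mul_nonneg (by positivity) (by linarith)

lemma le_div_of_hasDerivAt_translator {k r₀ : ℝ} {φ : ℝ → ℝ} (hk : 0 < k) (hr₀ : 0 < r₀)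
    (hode : ∀ r, r₀ ≤ r → HasDerivAt φ ((1 + φ r ^ 2) * (1 - k * φ r / r)) r)
    (h₀ : φ r₀ ≤ r₀ / k) {r : ℝ} (hr : r₀ ≤ r) : φ r ≤ r / k := by
  refine image_le_of_deriv_right_lt_deriv_boundary (B := (· / k)) (B' := fun _ ↦ 1 / k)
    (fun x hx ↦ (hode x hx.1).continuousAt.continuousWithinAt)
    (fun x hx ↦ (hode x hx.1).hasDerivWithinAt) h₀
    (fun x ↦ (hasDerivAt_id x).div_const k) ?_ ⟨hr, le_rfl⟩
  intro x hx hφx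
  have hx₀ : x ≠ 0 := (hr₀.trans_le hx.1).ne'
  have hrhs : (1 + φ x ^ 2) * (1 - k * φ x / x) = 0 := by
    rw [hφx]
    field_simp
    ring
  simpa [hrhs] using hk

lemma monotoneOn_Ici_of_hasDerivAt_nonneg {f f' : ℝ → ℝ} {a : ℝ}
    (hf : ∀ x, a ≤ x → HasDerivAt f (f' x) x) (hf' : ∀ x, a ≤ x → 0 ≤ f' x) :
    MonotoneOn f (Ici a) :=
  monotoneOn_of_hasDerivWithinAt_nonneg (convex_Ici a)
    (fun x hx ↦ (hf x hx).continuousAt.continuousWithinAt)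
    (fun x hx ↦ (hf x (interior_subset hx)).hasDerivWithinAt)
    (fun x hx ↦ hf' x (interior_subset hx))

/-- **Global bounds for the translator profile ODE.**
If `φ` solves `φ'(r) = (1+φ(r)²)(1 − (n−1)φ(r)/r)` on `[r₀, ∞)` with `r₀ > 0` and
`φ(r₀) ≤ 0`, then for all `r ≥ r₀`: `φ(r₀) ≤ φ(r) ≤ r/(n−1)` and `φ'(r) ≥ 0`. -/
theorem translator_profile_global_bounds
    (n : ℕ) (hn : 2 ≤ n) (r₀ : ℝ) (hr₀ : 0 < r₀) (φ : ℝ → ℝ)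
    (hode : ∀ r, r₀ ≤ r →
      HasDerivAt φ ((1 + φ r ^ 2) * (1 - ((n : ℝ) - 1) * φ r / r)) r)
    (hφr₀ : φ r₀ ≤ 0) :
    ∀ r, r₀ ≤ r →
      φ r₀ ≤ φ r ∧ φ r ≤ r / ((n : ℝ) - 1) ∧
        0 ≤ (1 + φ r ^ 2) * (1 - ((n : ℝ) - 1) * φ r / r) := by
  have hk : (0 : ℝ) < n - 1 := by
    have : (2 : ℝ) ≤ n := by exact_mod_cast hn
    linarith
  have hbound : ∀ r, r₀ ≤ r → φ r ≤ r / ((n : ℝ) - 1) :=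
    fun r ↦ le_div_of_hasDerivAt_translator hk hr₀ hode (hφr₀.trans (div_pos hr₀ hk).le)
  have hrhs : ∀ r, r₀ ≤ r → 0 ≤ (1 + φ r ^ 2) * (1 - ((n : ℝ) - 1) * φ r / r) :=
    fun r hr ↦ translator_rhs_nonneg_of_le_div hk (hr₀.trans_le hr) (hbound r hr)
  have hmono : MonotoneOn φ (Ici r₀) := monotoneOn_Ici_of_hasDerivAt_nonneg hode hrhs
  intro r hr
  exact ⟨hmono self_mem_Ici hr hr, hbound r hr, hrhs r hr⟩
end

section
/- Let n ≥ 2 be an integer, r₀ > 0, and let φ : [r₀,∞) → ℝ be differentiable and satisfy the translator profile ODE φ'(r) = (1+φ(r)²)(1 − (n−1)φ(r)/r) for all r ≥ r₀, with φ(r₀) ≤ 0. Then there exists a sequence (r_k) with r_k → ∞ such that (n−1)·φ(r_k)/r_k → 1 as k → ∞. -/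
/-!
Write `c = n - 1`. The line `c φ = r` is a barrier: where `c φ` touches it the ODE gives
`(c φ)' = 0 < 1 = r'`, so starting below it `c φ(r) ≤ r` forever. On the other hand
`(arctan φ)' = 1 - c φ / r`, and `arctan φ` takes values in an interval of length `π`, so on
every interval of length `π / ε` the mean value theorem finds a point with `c φ / r > 1 - ε`.
Squeezing the ratio between `1 - 1/(k+1)` and `1` along such points gives the sequence.
-/

open Filter Set Real

def IsTranslatorProfile (c r₀ : ℝ) (φ : ℝ → ℝ) : Prop :=
  ∀ r, r₀ ≤ r → HasDerivAt φ ((1 + φ r ^ 2) * (1 - c * φ r / r)) r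

namespace IsTranslatorProfile

variable {c r₀ : ℝ} {φ : ℝ → ℝ}

theorem mul_le_self (hφ : IsTranslatorProfile c r₀ φ) (hr₀ : 0 < r₀) (hc : 0 ≤ c)
    (hφr₀ : φ r₀ ≤ 0) {r : ℝ} (hr : r₀ ≤ r) : c * φ r ≤ r := by
  have hderiv : ∀ x ∈ Icc r₀ r, HasDerivAt (fun x => c * φ x)
      (c * ((1 + φ x ^ 2) * (1 - c * φ x / x))) x :=
    fun x hx => (hφ x hx.1).const_mul c
  refine image_le_of_deriv_right_lt_deriv_boundary (B := id) (B' := fun _ => 1)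
    (fun x hx => (hderiv x hx).continuousAt.continuousWithinAt)
    (fun x hx => (hderiv x (Ico_subset_Icc_self hx)).hasDerivWithinAt)
    (by simpa using mul_nonpos_of_nonneg_of_nonpos hc hφr₀ |>.trans hr₀.le)
    hasDerivAt_id ?_ ⟨hr, le_rfl⟩
  intro x hx htouch
  have hx₀ : x ≠ 0 := (hr₀.trans_le hx.1).ne'
  simp [htouch, hx₀]

theorem hasDerivAt_arctan (hφ : IsTranslatorProfile c r₀ φ) {r : ℝ} (hr : r₀ ≤ r) :
    HasDerivAt (fun x => arctan (φ x)) (1 - c * φ r / r) r := by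
  have h := (hφ r hr).arctan
  rwa [← mul_assoc, one_div_mul_cancel (by positivity), one_mul] at h

theorem exists_one_sub_lt (hφ : IsTranslatorProfile c r₀ φ) {R ε : ℝ} (hR : r₀ ≤ R)
    (hε : 0 < ε) : ∃ r ∈ Ioo R (R + π / ε), 1 - ε < c * φ r / r := by
  have hlen : 0 < π / ε := div_pos pi_pos hε
  have hderiv : ∀ x ∈ Icc R (R + π / ε), HasDerivAt (fun x => arctan (φ x))
      (1 - c * φ x / x) x :=
    fun x hx => hφ.hasDerivAt_arctan (hR.trans hx.1)
  obtain ⟨r, hr, hslope⟩ := exists_hasDerivAt_eq_slope _ (fun x => 1 - c * φ x / x)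
    (lt_add_of_pos_right R hlen) (fun x hx => (hderiv x hx).continuousAt.continuousWithinAt)
    (fun x hx => hderiv x (Ioo_subset_Icc_self hx))
  refine ⟨r, hr, ?_⟩
  have hrange : arctan (φ (R + π / ε)) - arctan (φ R) < π := by
    linarith [arctan_lt_pi_div_two (φ (R + π / ε)), neg_pi_div_two_lt_arctan (φ R)]
  have : 1 - c * φ r / r < ε := by
    rw [hslope, add_sub_cancel_left, div_lt_iff₀ hlen, mul_div_cancel₀ _ hε.ne']
    exact hrange
  linarith

end IsTranslatorProfile

/-- **Subsequential linear growth for the translator profile ODE.**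
If `φ` solves `φ'(r) = (1+φ(r)²)(1 − (n−1)φ(r)/r)` on `[r₀, ∞)` with `r₀ > 0` and
`φ(r₀) ≤ 0`, then there is a sequence `r_k → ∞` with `(n−1)φ(r_k)/r_k → 1`. -/
theorem translator_profile_subsequential_growth
    (n : ℕ) (hn : 2 ≤ n) (r₀ : ℝ) (hr₀ : 0 < r₀) (φ : ℝ → ℝ)
    (hode : ∀ r, r₀ ≤ r →
      HasDerivAt φ ((1 + φ r ^ 2) * (1 - ((n : ℝ) - 1) * φ r / r)) r)
    (hφr₀ : φ r₀ ≤ 0) :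
    ∃ r : ℕ → ℝ, Tendsto r atTop atTop ∧
      Tendsto (fun k => ((n : ℝ) - 1) * φ (r k) / r k) atTop (nhds 1) := by
  have hφ : IsTranslatorProfile ((n : ℝ) - 1) r₀ φ := hode
  have hc : (0 : ℝ) ≤ (n : ℝ) - 1 := by
    rw [sub_nonneg, Nat.one_le_cast]; omega
  choose r hr hlarge using fun k : ℕ =>
    hφ.exists_one_sub_lt (le_max_left r₀ k) (Nat.one_div_pos_of_nat (n := k))
  have hr₀r : ∀ k, r₀ ≤ r k := fun k => (le_max_left _ _).trans (hr k).1.le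
  refine ⟨r, tendsto_atTop_mono (fun k => (le_max_right _ _).trans (hr k).1.le)
    tendsto_natCast_atTop_atTop, ?_⟩
  have hlower : Tendsto (fun k : ℕ => 1 - 1 / ((k : ℝ) + 1)) atTop (nhds 1) := by
    simpa using (tendsto_const_nhds (x := (1 : ℝ))).sub tendsto_one_div_add_atTop_nhds_zero_nat
  refine tendsto_of_tendsto_of_tendsto_of_le_of_le hlower tendsto_const_nhds
    (fun k => (hlarge k).le) fun k => ?_
  exact (div_le_one (hr₀.trans_le (hr₀r k))).2 (hφ.mul_le_self hr₀ hc hφr₀ (hr₀r k))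
end

section
/- Let n ≥ 2 be an integer, R* > 0, and let φ : [R*,∞) → ℝ be differentiable and satisfy the translator profile ODE φ'(r) = (1+φ(r)²)(1 − (n−1)φ(r)/r) for all r ≥ R*, with φ(R*) = 0. Then for every r ≥ R* the partial-integration identity holds: φ(r) = (1/(n−1))·[ r − R*·exp(−(n−1)∫_{R*}^{r} (1+φ(s)²)/s ds) ] − (1/(n−1))·∫_{R*}^{r} exp(−(n−1)∫_{t}^{r} (1+φ(s)²)/s ds) dt. -/
/-! With `c = n - 1` and `g(s) = (1 + φ(s)²)/s`, the translator ODE says that `ψ(r) = c φ(r) - r`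
solves the linear equation `ψ' = -c g ψ - 1`, with `ψ(R*) = -R*`. The identity is the
variation-of-constants formula for this equation, solved for `φ = (r + ψ)/c`. -/

open Set Real intervalIntegral

theorem linear_ode_variation_of_constants {p q y : ℝ → ℝ} {a b : ℝ} (hab : a ≤ b)
    (hp : ContinuousOn p (Icc a b)) (hq : ContinuousOn q (Icc a b))
    (hy : ContinuousOn y (Icc a b))
    (hy' : ∀ t ∈ Ioo a b, HasDerivAt y (-p t * y t + q t) t) :
    y b = exp (-∫ s in a..b, p s) * y a + ∫ t in a..b, exp (-∫ s in t..b, p s) * q t := by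
  set P : ℝ → ℝ := fun t => ∫ s in a..t, p s
  have hp_int : ∀ t ∈ Icc a b, IntervalIntegrable p MeasureTheory.volume a t := fun t ht =>
    (hp.mono (Icc_subset_Icc_right ht.2)).intervalIntegrable_of_Icc ht.1
  have hP_cont : ContinuousOn P (Icc a b) := by
    simpa only [uIcc_of_le hab] using
      continuousOn_primitive_interval' (hp_int b ⟨hab, le_rfl⟩) left_mem_uIcc
  have hP_deriv : ∀ t ∈ Ioo a b, HasDerivAt P (p t) t := fun t ht =>
    integral_hasDerivAt_right (hp_int t (Ioo_subset_Icc_self ht))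
      ((hp.mono Ioo_subset_Icc_self).stronglyMeasurableAtFilter isOpen_Ioo t ht)
      (hp.continuousAt (Icc_mem_nhds ht.1 ht.2))
  have hP_sub : ∀ t ∈ Icc a b, ∫ s in t..b, p s = P b - P t := fun t ht =>
    (integral_interval_sub_left (hp_int b ⟨hab, le_rfl⟩) (hp_int t ht)).symm
  -- `exp P` is an integrating factor: `(exp P * y)' = exp P * q`.
  have hFTC : ∫ t in a..b, exp (P t) * q t = exp (P b) * y b - exp (P a) * y a := by
    refine integral_eq_sub_of_hasDerivAt_of_le hab (hP_cont.rexp.mul hy)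
      (fun t ht => ((hP_deriv t ht).exp.mul (hy' t ht)).congr_deriv (by ring))
      ((hP_cont.rexp.mul hq).intervalIntegrable_of_Icc hab)
  have hPa : P a = 0 := integral_same
  have hrhs : ∫ t in a..b, exp (-∫ s in t..b, p s) * q t
      = exp (-P b) * ∫ t in a..b, exp (P t) * q t := by
    rw [← integral_const_mul]
    refine integral_congr fun t ht => ?_
    rw [uIcc_of_le hab] at ht
    rw [hP_sub t ht, ← mul_assoc, ← exp_add]
    ring_nf
  rw [hrhs, hFTC, hPa, exp_zero, one_mul, mul_sub, ← mul_assoc, ← exp_add]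
  change y b = exp (-P b) * y a + _
  simp

theorem hasDerivAt_translator_profile_linear {φ : ℝ → ℝ} {c r : ℝ} (hr : r ≠ 0)
    (hφ : HasDerivAt φ ((1 + φ r ^ 2) * (1 - c * φ r / r)) r) :
    HasDerivAt (fun t => c * φ t - t) (-(c * ((1 + φ r ^ 2) / r)) * (c * φ r - r) + -1) r := by
  refine ((hφ.const_mul c).sub (hasDerivAt_id' r)).congr_deriv ?_
  field_simp
  ring

/-- **Partial-integration identity for the translator profile ODE.**
If `φ` solves `φ'(r) = (1+φ(r)²)(1 − (n−1)φ(r)/r)` on `[R*, ∞)` with `R* > 0` and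
`φ(R*) = 0`, then for all `r ≥ R*`:
`φ(r) = (1/(n−1))[r − R* e^{−(n−1)∫_{R*}^r (1+φ²)/s ds}]
        − (1/(n−1)) ∫_{R*}^r e^{−(n−1)∫_t^r (1+φ²)/s ds} dt`. -/
theorem translator_profile_partial_integration
    (n : ℕ) (hn : 2 ≤ n) (Rs : ℝ) (hRs : 0 < Rs) (φ : ℝ → ℝ)
    (hode : ∀ r, Rs ≤ r →
      HasDerivAt φ ((1 + φ r ^ 2) * (1 - ((n : ℝ) - 1) * φ r / r)) r)
    (hφRs : φ Rs = 0) :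
    ∀ r, Rs ≤ r →
      φ r =
        (1 / ((n : ℝ) - 1)) *
            (r - Rs * Real.exp (-((n : ℝ) - 1) * ∫ s in Rs..r, (1 + φ s ^ 2) / s))
          - (1 / ((n : ℝ) - 1)) *
            ∫ t in Rs..r, Real.exp (-((n : ℝ) - 1) * ∫ s in t..r, (1 + φ s ^ 2) / s) := by
  intro r hr
  set c : ℝ := (n : ℝ) - 1
  have hc : c ≠ 0 := by
    have : (2 : ℝ) ≤ n := by exact_mod_cast hn
    linarith
  have hne : ∀ t ∈ Icc Rs r, t ≠ 0 := fun t ht => (hRs.trans_le ht.1).ne'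
  have hφ_cont : ContinuousOn φ (Icc Rs r) := fun t ht =>
    (hode t ht.1).continuousAt.continuousWithinAt
  have key := linear_ode_variation_of_constants (p := fun s => c * ((1 + φ s ^ 2) / s))
    (q := fun _ => -1) (y := fun t => c * φ t - t) hr
    (continuousOn_const.mul ((continuousOn_const.add (hφ_cont.pow 2)).div continuousOn_id hne))
    continuousOn_const ((continuousOn_const.mul hφ_cont).sub continuousOn_id)
    (fun t ht => hasDerivAt_translator_profile_linear (hne t (Ioo_subset_Icc_self ht))
      (hode t ht.1.le))
  simp only [integral_const_mul, hφRs, mul_zero, zero_sub, mul_neg_one,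
    intervalIntegral.integral_neg] at key
  field_simp
  linarith
end

section
/- Let n ≥ 2 be an integer, R* > 0, and let φ : [R*,∞) → ℝ be differentiable and satisfy the translator profile ODE φ'(r) = (1+φ(r)²)(1 − (n−1)φ(r)/r) for all r ≥ R*, with φ(R*) = 0. Then for every r ≥ R*: φ(r) ≥ (r−R*)/(n−1) − √((n−1)/2) · ( ∫_{R*}^{r} t/(1+φ(t)²) dt )^{1/2}. -/
/-!
Write `N = n - 1` and `D(r) = (r - R*)/N - φ(r)`. Since `1 - Nφ/r = (N D + R*)/r`, the ODE gives
`D' = 1/N - (1 + φ²)(N D + R*)/r`, and wherever `D > 0` AM–GM together with `N ≥ 1` yields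
`(D₊²)' = 2 D₊ D' ≤ (N/2) · r/(1 + φ²)`. Integrating from `R*`, where `D = 0`, bounds `D₊²` by
`N/2` times the integral, and taking square roots gives the claim.
-/

open Set

theorem hasDerivAt_max_zero_sq (x : ℝ) :
    HasDerivAt (fun y : ℝ => max y 0 ^ 2) (2 * max x 0) x := by
  refine hasDerivAt_of_hasDerivAt_of_ne' (f := fun y : ℝ => max y 0 ^ 2)
    (g := fun y => 2 * max y 0) (x := 0) (fun y hy => ?_) (by fun_prop) (by fun_prop) x
  rcases hy.lt_or_gt with hy | hy
  · have hzero : (fun y : ℝ => max y 0 ^ 2) =ᶠ[nhds y] fun _ => 0 := by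
      filter_upwards [eventually_lt_nhds hy] with z hz
      simp [max_eq_right hz.le]
    simpa [max_eq_right hy.le] using (hasDerivAt_const y (0 : ℝ)).congr_of_eventuallyEq hzero
  · have hsq : (fun y : ℝ => max y 0 ^ 2) =ᶠ[nhds y] fun z => z ^ 2 := by
      filter_upwards [eventually_gt_nhds hy] with z hz
      rw [max_eq_left hz.le]
    simpa [max_eq_left hy.le] using (hasDerivAt_pow 2 y).congr_of_eventuallyEq hsq

theorem HasDerivAt.max_zero_sq {f : ℝ → ℝ} {f' x : ℝ} (hf : HasDerivAt f f' x) :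
    HasDerivAt (fun y => max (f y) 0 ^ 2) (2 * max (f x) 0 * f') x :=
  (hasDerivAt_max_zero_sq (f x)).comp x hf

theorem two_mul_max_zero_mul_le {N R t q d : ℝ} (hN : 1 ≤ N) (hR : 0 ≤ R) (ht : 0 < t)
    (hq : 0 < q) :
    2 * max d 0 * (1 / N - q * (N * d + R) / t) ≤ N / 2 * (t / q) := by
  have hN₀ : 0 < N := zero_lt_one.trans_le hN
  rcases le_or_gt d 0 with hd | hd
  · rw [max_eq_right hd]
    simp only [mul_zero, zero_mul]
    positivity
  rw [max_eq_left hd.le]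
  have hdN : 2 * d * (1 / N) ≤ 2 * N * d := by
    rw [mul_one_div, div_le_iff₀ hN₀]
    nlinarith [mul_nonneg (mul_nonneg hd.le (sub_nonneg.2 hN)) (by linarith : (0 : ℝ) ≤ N + 1)]
  have hamgm : 2 * N * d - 2 * q * N * d ^ 2 / t ≤ N / 2 * (t / q) := by
    have hsq : 0 ≤ N * (t - 2 * q * d) ^ 2 / (2 * q * t) := by positivity
    have hid : N / 2 * (t / q) - (2 * N * d - 2 * q * N * d ^ 2 / t) =
        N * (t - 2 * q * d) ^ 2 / (2 * q * t) := by
      field_simp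
      ring
    linarith
  have hRterm : 0 ≤ 2 * d * (q * R / t) := by positivity
  calc 2 * d * (1 / N - q * (N * d + R) / t)
      = 2 * d * (1 / N) - 2 * q * N * d ^ 2 / t - 2 * d * (q * R / t) := by ring
    _ ≤ N / 2 * (t / q) := by linarith

section TranslatorProfile

variable {N Rs : ℝ} {φ : ℝ → ℝ}

theorem translator_defect_hasDerivAt (hN : 0 < N) {t : ℝ} (ht : 0 < t)
    (hφ : HasDerivAt φ ((1 + φ t ^ 2) * (1 - N * φ t / t)) t) :
    HasDerivAt (fun s => (s - Rs) / N - φ s)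
      (1 / N - (1 + φ t ^ 2) * (N * ((t - Rs) / N - φ t) + Rs) / t) t := by
  have hline : HasDerivAt (fun s => (s - Rs) / N) (1 / N) t :=
    ((hasDerivAt_id t).sub_const Rs).div_const N
  have hslope : (N * ((t - Rs) / N - φ t) + Rs) / t = 1 - N * φ t / t := by
    field_simp
    ring
  rw [mul_div_assoc, hslope]
  exact hline.sub hφ

theorem translator_max_defect_sq_le (hN : 1 ≤ N) (hRs : 0 < Rs)
    (hode : ∀ r, Rs ≤ r → HasDerivAt φ ((1 + φ r ^ 2) * (1 - N * φ r / r)) r)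
    (hφRs : φ Rs = 0) {r : ℝ} (hr : Rs ≤ r) :
    max ((r - Rs) / N - φ r) 0 ^ 2 ≤ N / 2 * ∫ t in Rs..r, t / (1 + φ t ^ 2) := by
  have hN₀ : 0 < N := zero_lt_one.trans_le hN
  have hφcont : ContinuousOn φ (Icc Rs r) := fun t ht =>
    (hode t ht.1).continuousAt.continuousWithinAt
  have hbound_cont : ContinuousOn (fun t => N / 2 * (t / (1 + φ t ^ 2))) (Icc Rs r) :=
    continuousOn_const.mul (continuousOn_id.div (by fun_prop) fun t _ => by positivity)
  have hdefect_cont : ContinuousOn (fun t => max ((t - Rs) / N - φ t) 0 ^ 2) (Icc Rs r) := by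
    fun_prop
  have hmain := intervalIntegral.sub_le_integral_of_hasDeriv_right_of_le hr hdefect_cont
    (fun t ht => ((translator_defect_hasDerivAt hN₀ (hRs.trans ht.1)
      (hode t ht.1.le)).max_zero_sq).hasDerivWithinAt)
    hbound_cont.integrableOn_Icc
    (fun t ht => two_mul_max_zero_mul_le hN hRs.le (hRs.trans ht.1) (by positivity))
  rw [intervalIntegral.integral_const_mul] at hmain
  simpa [hφRs] using hmain

end TranslatorProfile

/-- **Cauchy–Schwarz lower bound for the translator profile ODE.**
If `φ` solves `φ'(r) = (1+φ(r)²)(1 − (n−1)φ(r)/r)` on `[R*, ∞)` with `R* > 0` and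
`φ(R*) = 0`, then for all `r ≥ R*`:
`φ(r) ≥ (r−R*)/(n−1) − √((n−1)/2) (∫_{R*}^r t/(1+φ(t)²) dt)^{1/2}`. -/
theorem translator_profile_cauchy_schwarz_bound
    (n : ℕ) (hn : 2 ≤ n) (Rs : ℝ) (hRs : 0 < Rs) (φ : ℝ → ℝ)
    (hode : ∀ r, Rs ≤ r →
      HasDerivAt φ ((1 + φ r ^ 2) * (1 - ((n : ℝ) - 1) * φ r / r)) r)
    (hφRs : φ Rs = 0) :
    ∀ r, Rs ≤ r →
      (r - Rs) / ((n : ℝ) - 1)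
          - Real.sqrt (((n : ℝ) - 1) / 2) *
              Real.sqrt (∫ t in Rs..r, t / (1 + φ t ^ 2)) ≤ φ r := by
  intro r hr
  have hN : (1 : ℝ) ≤ (n : ℝ) - 1 := by
    have : (2 : ℝ) ≤ n := by exact_mod_cast hn
    linarith
  set D := (r - Rs) / ((n : ℝ) - 1) - φ r
  have hsq := translator_max_defect_sq_le hN hRs hode hφRs hr
  have hD : D ≤ Real.sqrt (((n : ℝ) - 1) / 2) * Real.sqrt (∫ t in Rs..r, t / (1 + φ t ^ 2)) :=
    calc D ≤ max D 0 := le_max_left D 0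
      _ = Real.sqrt (max D 0 ^ 2) := (Real.sqrt_sq (le_max_right D 0)).symm
      _ ≤ Real.sqrt ((((n : ℝ) - 1) / 2) * ∫ t in Rs..r, t / (1 + φ t ^ 2)) :=
        Real.sqrt_le_sqrt hsq
      _ = _ := Real.sqrt_mul (by linarith) _
  linarith
end

section
/- Let n ≥ 2 be an integer, R* > 0, and let φ : [R*,∞) → ℝ be differentiable and satisfy the translator profile ODE φ'(r) = (1+φ(r)²)(1 − (n−1)φ(r)/r) for all r ≥ R*, with φ(R*) = 0. Set α_n = 1 − 1/√(2(n−1)). Then for every r ≥ R*: φ(r) ≥ α_n·(r−R*)/(n−1) ≥ (r−R*)/(4(n−1)); and if moreover n ≥ 3, then φ(r) ≥ (r−R*)/(2(n−1)). -/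
/-!
A line `c (r - R*)` of slope `c ≥ 0` with `n c < 1` stays below `φ`: at a point `x` where `φ`
touches it, `φ(x)/x ≤ c` gives `φ'(x) ≥ 1 - (n - 1) c > c`, so `φ` cannot cross the line.
The slope `αₙ/(n - 1)` is admissible because `n αₙ < n - 1` amounts to `√(2(n - 1)) < n`.
-/

open Real Set

theorem slope_lt_translator_rhs {N c R x y : ℝ} (hN : 0 ≤ N) (hc : 0 ≤ c)
    (hcN : (N + 1) * c < 1) (hR : 0 < R) (hx : R ≤ x) (hy : y = c * (x - R)) :
    c < (1 + y ^ 2) * (1 - N * y / x) := by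
  have hx0 : 0 < x := hR.trans_le hx
  have hy_le : y / x ≤ c := by
    rw [div_le_iff₀ hx0, hy]
    nlinarith
  have hNy : N * y / x ≤ N * c := by
    rw [mul_div_assoc]
    exact mul_le_mul_of_nonneg_left hy_le hN
  calc c < 1 - N * c := by linarith
    _ ≤ 1 - N * y / x := by linarith
    _ ≤ (1 + y ^ 2) * (1 - N * y / x) :=
      le_mul_of_one_le_left (by linarith) (by nlinarith)

theorem linear_le_of_translator_ode {N c R : ℝ} {φ : ℝ → ℝ} (hN : 0 ≤ N) (hc : 0 ≤ c)
    (hcN : (N + 1) * c < 1) (hR : 0 < R)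
    (hode : ∀ r, R ≤ r → HasDerivAt φ ((1 + φ r ^ 2) * (1 - N * φ r / r)) r)
    (hφR : φ R = 0) (r : ℝ) (hr : R ≤ r) :
    c * (r - R) ≤ φ r := by
  refine image_le_of_deriv_right_lt_deriv_boundary' (a := R) (b := r)
    (f := fun x ↦ c * (x - R)) (f' := fun _ ↦ c) (by fun_prop) (fun x _ ↦ ?_) (by simp [hφR])
    (fun x hx ↦ (hode x hx.1).continuousAt.continuousWithinAt)
    (fun x hx ↦ (hode x hx.1).hasDerivWithinAt)
    (fun x hx htouch ↦ slope_lt_translator_rhs hN hc hcN hR hx.1 htouch.symm) ⟨hr, le_rfl⟩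
  simpa using (((hasDerivAt_id x).sub_const R).const_mul c).hasDerivWithinAt

theorem inv_sqrt_two_mul_le {N t : ℝ} (ht : 0 < t) (h : 1 ≤ 2 * N * t ^ 2) :
    1 / √(2 * N) ≤ t := by
  have hN : 0 < 2 * N := by nlinarith
  rw [div_le_iff₀ (sqrt_pos.2 hN), ← sqrt_sq ht.le, ← sqrt_mul (sq_nonneg t)]
  exact one_le_sqrt.2 (by linarith)

theorem add_one_mul_one_sub_inv_sqrt_two_mul_lt {N : ℝ} (hN : 0 < N) :
    (N + 1) * (1 - 1 / √(2 * N)) < N := by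
  have hs : 0 < √(2 * N) := sqrt_pos.2 (by linarith)
  have hs_lt : √(2 * N) < N + 1 := by
    rw [sqrt_lt' (by linarith)]
    nlinarith
  have : 1 < (N + 1) / √(2 * N) := (one_lt_div hs).2 hs_lt
  rw [mul_one_sub, mul_one_div]
  linarith

theorem div_mul_le_mul_div_of_inv_le {a d k N : ℝ} (hd : 0 ≤ d) (hN : 0 < N)
    (h : 1 / k ≤ a) : d / (k * N) ≤ a * d / N := by
  have hdk : d / k ≤ a * d := by
    rw [div_eq_inv_mul, ← one_div]
    exact mul_le_mul_of_nonneg_right h hd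
  rw [div_mul_eq_div_div]
  exact div_le_div_of_nonneg_right hdk hN.le

/-- **First linear lower bound for the translator profile ODE.**
If `φ` solves `φ'(r) = (1+φ(r)²)(1 − (n−1)φ(r)/r)` on `[R*, ∞)` with `R* > 0` and
`φ(R*) = 0`, and `αₙ = 1 − 1/√(2(n−1))`, then for all `r ≥ R*`:
`φ(r) ≥ αₙ(r−R*)/(n−1) ≥ (r−R*)/(4(n−1))`, and if `n ≥ 3` also
`φ(r) ≥ (r−R*)/(2(n−1))`. -/
theorem translator_profile_linear_lower_bound
    (n : ℕ) (hn : 2 ≤ n) (Rs : ℝ) (hRs : 0 < Rs) (φ : ℝ → ℝ)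
    (hode : ∀ r, Rs ≤ r →
      HasDerivAt φ ((1 + φ r ^ 2) * (1 - ((n : ℝ) - 1) * φ r / r)) r)
    (hφRs : φ Rs = 0)
    (α : ℝ) (hα : α = 1 - 1 / Real.sqrt (2 * ((n : ℝ) - 1))) :
    ∀ r, Rs ≤ r →
      α * (r - Rs) / ((n : ℝ) - 1) ≤ φ r ∧
      (r - Rs) / (4 * ((n : ℝ) - 1)) ≤ α * (r - Rs) / ((n : ℝ) - 1) ∧
      (3 ≤ n → (r - Rs) / (2 * ((n : ℝ) - 1)) ≤ φ r) := by
  intro r hr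
  have hN1 : (1 : ℝ) ≤ (n : ℝ) - 1 := by
    have : (2 : ℝ) ≤ n := by exact_mod_cast hn
    linarith
  set N := (n : ℝ) - 1
  have hN0 : 0 < N := by linarith
  have hα4 : 1 / 4 ≤ α := by
    rw [hα]
    linarith [inv_sqrt_two_mul_le (N := N) (t := 3 / 4) (by norm_num) (by nlinarith)]
  have hslope : (N + 1) * (α / N) < 1 := by
    rw [mul_div_assoc', div_lt_one hN0, hα]
    exact add_one_mul_one_sub_inv_sqrt_two_mul_lt hN0
  have hφ : α * (r - Rs) / N ≤ φ r := by
    rw [mul_div_right_comm]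
    exact linear_le_of_translator_ode hN0.le (div_nonneg (by linarith) hN0.le) hslope hRs
      hode hφRs r hr
  have hd : 0 ≤ r - Rs := by linarith
  refine ⟨hφ, div_mul_le_mul_div_of_inv_le hd hN0 (by linarith), fun hn3 ↦ ?_⟩
  have hN2 : 2 ≤ N := by
    have : (3 : ℝ) ≤ n := by exact_mod_cast hn3
    linarith
  have hα2 : 1 / 2 ≤ α := by
    rw [hα]
    linarith [inv_sqrt_two_mul_le (N := N) (t := 1 / 2) (by norm_num) (by nlinarith)]
  exact (div_mul_le_mul_div_of_inv_le hd hN0 hα2).trans hφ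
end

section
/- Let n ≥ 2 be an integer, R* > 0, and let φ : [R*,∞) → ℝ be differentiable and satisfy the translator profile ODE φ'(r) = (1+φ(r)²)(1 − (n−1)φ(r)/r) for all r ≥ R*, with φ(R*) = 0. Set α_n = 1 − 1/√(2(n−1)) and V(r) = ∫_{R*}^{r} φ(t) dt. Then for every r ≥ R*: V(r) ≥ (α_n/(2(n−1)))·(r−R*)². -/
/-!
The line `m (r − R*)` with slope `m = αₙ/(n−1)` is a lower barrier for `φ`: where they touch,
`φ ≥ 0` and `(n−1)φ/r ≤ (n−1)m`, so the ODE gives `φ' ≥ 1 − (n−1)m`, which exceeds `m` because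
`m < 1/n`, i.e. `√(2(n−1)) < n`. Integrating `φ ≥ m (r − R*)` gives the bound on `V`.
-/

open Set

theorem mul_sq_div_two_le_integral_of_mul_sub_le {f : ℝ → ℝ} {a b m : ℝ} (hab : a ≤ b)
    (hf : ContinuousOn f (Icc a b)) (hlow : ∀ x ∈ Icc a b, m * (x - a) ≤ f x) :
    m * (b - a) ^ 2 / 2 ≤ ∫ x in a..b, f x := by
  have hlin : ∫ x in a..b, m * (x - a) = m * (b - a) ^ 2 / 2 := by
    rw [intervalIntegral.integral_const_mul, intervalIntegral.integral_sub
      (continuous_id'.intervalIntegrable a b) intervalIntegrable_const, integral_id,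
      intervalIntegral.integral_const, smul_eq_mul]
    ring
  rw [← hlin]
  exact intervalIntegral.integral_mono_on hab
    ((by fun_prop : Continuous fun x => m * (x - a)).intervalIntegrable a b) (hf.intervalIntegrable_of_Icc hab) hlow

theorem slope_lt_translator_rhs_s7 {k m R x : ℝ} (hR : 0 < R) (hx : R ≤ x) (hk : 0 ≤ k)
    (hm : 0 ≤ m) (hmk : m * (k + 1) < 1) :
    m < (1 + (m * (x - R)) ^ 2) * (1 - k * (m * (x - R)) / x) := by
  have hx0 : 0 < x := hR.trans_le hx
  have hfrac : k * (m * (x - R)) / x ≤ k * m := by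
    rw [div_le_iff₀ hx0]
    nlinarith [mul_nonneg hk hm]
  calc m < 1 - k * m := by linarith
    _ ≤ 1 - k * (m * (x - R)) / x := by linarith
    _ ≤ (1 + (m * (x - R)) ^ 2) * (1 - k * (m * (x - R)) / x) := by
      nlinarith [sq_nonneg (m * (x - R))]

theorem translator_profile_ge_linear {k m R : ℝ} {φ : ℝ → ℝ} (hR : 0 < R) (hk : 0 ≤ k)
    (hm : 0 ≤ m) (hmk : m * (k + 1) < 1)
    (hode : ∀ r, R ≤ r → HasDerivAt φ ((1 + φ r ^ 2) * (1 - k * φ r / r)) r)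
    (hφR : φ R = 0) {x : ℝ} (hx : R ≤ x) : m * (x - R) ≤ φ x := by
  have hline (y : ℝ) : HasDerivWithinAt (fun t => m * (t - R)) m (Ici y) y := by
    simpa using ((hasDerivWithinAt_id y (Ici y)).sub_const R).const_mul m
  refine image_le_of_deriv_right_lt_deriv_boundary' (by fun_prop) (fun y _ => hline y)
    (by simp [hφR]) (fun y hy => (hode y hy.1).continuousAt.continuousWithinAt)
    (fun y hy => (hode y hy.1).hasDerivWithinAt) ?_ (right_mem_Icc.2 hx)
  rintro y hy htouch
  rw [← htouch]
  exact slope_lt_translator_rhs_s7 hR hy.1 hk hm hmk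

theorem one_sub_inv_sqrt_two_mul_nonneg {k : ℝ} (hk : 1 / 2 ≤ k) : 0 ≤ 1 - 1 / √(2 * k) := by
  have hs : 1 ≤ √(2 * k) := Real.one_le_sqrt.2 (by linarith)
  have : 1 / √(2 * k) ≤ 1 := by rw [div_le_one (by linarith)]; exact hs
  linarith

theorem one_sub_inv_sqrt_two_mul_mul_lt {k : ℝ} (hk : 0 < k) :
    (1 - 1 / √(2 * k)) * (k + 1) < k := by
  have hs : 0 < √(2 * k) := Real.sqrt_pos.2 (by linarith)
  have hsk : √(2 * k) < k + 1 := (Real.sqrt_lt' (by linarith)).2 (by nlinarith)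
  have : (1 - 1 / √(2 * k)) * (k + 1) = k + 1 - (k + 1) / √(2 * k) := by ring
  rw [this, sub_lt_comm, add_sub_cancel_left, lt_div_iff₀ hs]
  linarith

/-- **Quadratic lower bound for the height function of the translator profile.**
If `φ` solves `φ'(r) = (1+φ(r)²)(1 − (n−1)φ(r)/r)` on `[R*, ∞)` with `R* > 0` and
`φ(R*) = 0`, `αₙ = 1 − 1/√(2(n−1))` and `V(r) = ∫_{R*}^r φ`, then for all `r ≥ R*`:
`V(r) ≥ (αₙ/(2(n−1)))(r−R*)²`. -/
theorem translator_profile_height_quadratic_bound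
    (n : ℕ) (hn : 2 ≤ n) (Rs : ℝ) (hRs : 0 < Rs) (φ : ℝ → ℝ)
    (hode : ∀ r, Rs ≤ r →
      HasDerivAt φ ((1 + φ r ^ 2) * (1 - ((n : ℝ) - 1) * φ r / r)) r)
    (hφRs : φ Rs = 0)
    (α : ℝ) (hα : α = 1 - 1 / Real.sqrt (2 * ((n : ℝ) - 1)))
    (V : ℝ → ℝ) (hV : ∀ r, V r = ∫ t in Rs..r, φ t) :
    ∀ r, Rs ≤ r →
      α / (2 * ((n : ℝ) - 1)) * (r - Rs) ^ 2 ≤ V r := by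
  intro r hr
  have hk : (1 : ℝ) ≤ n - 1 := by
    have : (2 : ℝ) ≤ n := by exact_mod_cast hn
    linarith
  have hm : 0 ≤ α / ((n : ℝ) - 1) :=
    div_nonneg (hα ▸ one_sub_inv_sqrt_two_mul_nonneg (by linarith)) (by linarith)
  have hmk : α / ((n : ℝ) - 1) * ((n : ℝ) - 1 + 1) < 1 := by
    rw [div_mul_eq_mul_div, div_lt_one (by linarith)]
    exact hα ▸ one_sub_inv_sqrt_two_mul_mul_lt (by linarith)
  have hcont : ContinuousOn φ (Icc Rs r) :=
    fun x hx => (hode x hx.1).continuousAt.continuousWithinAt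
  calc
    α / (2 * ((n : ℝ) - 1)) * (r - Rs) ^ 2 = α / ((n : ℝ) - 1) * (r - Rs) ^ 2 / 2 := by
      rw [mul_comm 2, ← div_div]; ring
    _ ≤ V r := hV r ▸ mul_sq_div_two_le_integral_of_mul_sub_le hr hcont
      fun x hx => translator_profile_ge_linear hRs (by linarith) hm hmk hode hφRs hx.1
end

section
/- Let n ≥ 2 be an integer, R* > 0, and let φ : [R*,∞) → ℝ be differentiable and satisfy the translator profile ODE φ'(r) = (1+φ(r)²)(1 − (n−1)φ(r)/r) for all r ≥ R*, with φ(R*) = 0. Set α_n = 1 − 1/√(2(n−1)) and β_n = α_n/(n−1). Then for every r ≥ R*: ∫_{R*}^{r} t/(1+φ(t)²) dt ≤ log(1 + β_n²(r−R*)²)/(2β_n²) + (R*/β_n)·arctan(β_n(r−R*)). -/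
/-!
With `m = n - 1`, the constant `βₙ` satisfies `(m + 1) βₙ < 1`. Hence wherever `φ` touches the
line `βₙ (r - R*)` from above, `φ' ≥ 1 - m βₙ > βₙ`, so `φ` stays above that line. Replacing `φ`
by the line only enlarges the integrand `t / (1 + φ²)`, and the resulting integral is elementary:
`log (1 + βₙ² (r - R*)²) / (2 βₙ²) + (R* / βₙ) arctan (βₙ (r - R*))` is an antiderivative.
-/

open Set

lemma one_lt_sqrt_two_mul {m : ℝ} (hm : 1 ≤ m) : 1 < √(2 * m) :=
  Real.lt_sqrt_of_sq_lt (by linarith)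

lemma sqrt_two_mul_lt_add_one {m : ℝ} (hm : 1 ≤ m) : √(2 * m) < m + 1 :=
  (Real.sqrt_lt' (by linarith)).2 (by nlinarith)

lemma one_sub_inv_sqrt_two_mul_div_pos {m : ℝ} (hm : 1 ≤ m) : 0 < (1 - 1 / √(2 * m)) / m := by
  have hs := one_lt_sqrt_two_mul hm
  have : 1 / √(2 * m) < 1 := (div_lt_one (by linarith)).2 hs
  exact div_pos (by linarith) (by linarith)

lemma add_one_mul_one_sub_inv_sqrt_two_mul_div_lt_one {m : ℝ} (hm : 1 ≤ m) :
    (m + 1) * ((1 - 1 / √(2 * m)) / m) < 1 := by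
  have hs := one_lt_sqrt_two_mul hm
  have hs' := sqrt_two_mul_lt_add_one hm
  rw [← lt_div_iff₀' (by linarith), div_lt_div_iff₀ (by linarith) (by linarith),
    one_sub_div (by positivity), div_mul_eq_mul_div, div_lt_iff₀ (by linarith)]
  nlinarith

lemma linear_le_of_hasDerivAt_riccati {φ : ℝ → ℝ} {a r c β : ℝ} (ha : 0 ≤ a) (hc : 0 ≤ c)
    (hβ : 0 ≤ β) (hcβ : (c + 1) * β < 1)
    (hode : ∀ x ∈ Icc a r, HasDerivAt φ ((1 + φ x ^ 2) * (1 - c * φ x / x)) x)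
    (hφa : φ a = 0) : ∀ t ∈ Icc a r, β * (t - a) ≤ φ t := by
  refine image_le_of_deriv_right_lt_deriv_boundary' (f' := fun _ => β) (by fun_prop)
    (fun x _ => by simpa using (((hasDerivAt_id x).sub_const a).const_mul β).hasDerivWithinAt)
    (by simp [hφa]) (fun x hx => (hode x hx).continuousAt.continuousWithinAt)
    (fun x hx => (hode x (Ico_subset_Icc_self hx)).hasDerivWithinAt) ?_
  intro x hx htouch
  have hx0 : 0 ≤ x := ha.trans hx.1
  have hratio : c * φ x / x ≤ c * β := by
    rw [← htouch, mul_div_assoc, mul_div_assoc]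
    exact mul_le_mul_of_nonneg_left
      (mul_le_of_le_one_right hβ (div_le_one_of_le₀ (by linarith [hx.1]) hx0)) hc
  have hpos : 0 ≤ 1 - c * φ x / x := by linarith
  calc β < 1 - c * β := by linarith
    _ ≤ 1 - c * φ x / x := by linarith
    _ ≤ (1 + φ x ^ 2) * (1 - c * φ x / x) :=
      le_mul_of_one_le_left hpos (by nlinarith [sq_nonneg (φ x)])

lemma hasDerivAt_log_one_add_sq_add_arctan {a β : ℝ} (hβ : β ≠ 0) (t : ℝ) :
    HasDerivAt (fun t => Real.log (1 + β ^ 2 * (t - a) ^ 2) / (2 * β ^ 2)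
        + (a / β) * Real.arctan (β * (t - a)))
      (t / (1 + (β * (t - a)) ^ 2)) t := by
  have hlin : HasDerivAt (fun t => β * (t - a)) β t := by
    simpa using ((hasDerivAt_id t).sub_const a).const_mul β
  have hquad := (hlin.fun_pow 2).const_add 1
  simp only [mul_pow] at hquad
  have hpos : 0 < 1 + β ^ 2 * (t - a) ^ 2 := by positivity
  refine (((hquad.log hpos.ne').div_const (2 * β ^ 2)).add
    (hlin.arctan.const_mul (a / β))).congr_deriv ?_
  rw [mul_pow]
  field_simp
  ring

lemma integral_div_one_add_mul_sub_sq {a β : ℝ} (hβ : β ≠ 0) (r : ℝ) :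
    ∫ t in a..r, t / (1 + (β * (t - a)) ^ 2) =
      Real.log (1 + β ^ 2 * (r - a) ^ 2) / (2 * β ^ 2) + (a / β) * Real.arctan (β * (r - a)) := by
  rw [intervalIntegral.integral_eq_sub_of_hasDerivAt
    (fun t _ => hasDerivAt_log_one_add_sq_add_arctan hβ t)
    ((continuous_id.div (by fun_prop) fun t => by positivity).intervalIntegrable a r)]
  simp

lemma integral_div_one_add_sq_le_of_le {f g : ℝ → ℝ} {a r : ℝ} (ha : 0 ≤ a) (har : a ≤ r)
    (hf : ContinuousOn f (Icc a r)) (hg : ContinuousOn g (Icc a r))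
    (hgf : ∀ t ∈ Icc a r, 0 ≤ g t ∧ g t ≤ f t) :
    ∫ t in a..r, t / (1 + f t ^ 2) ≤ ∫ t in a..r, t / (1 + g t ^ 2) := by
  have hint : ∀ h : ℝ → ℝ, ContinuousOn h (Icc a r) →
      IntervalIntegrable (fun t => t / (1 + h t ^ 2)) MeasureTheory.volume a r := fun h hh =>
    ContinuousOn.intervalIntegrable (by
      rw [uIcc_of_le har]
      exact continuousOn_id.div (continuousOn_const.add (hh.pow 2)) fun t _ => by positivity)
  refine intervalIntegral.integral_mono_on har (hint f hf) (hint g hg) fun t ht => ?_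
  obtain ⟨hg0, hgf⟩ := hgf t ht
  exact div_le_div_of_nonneg_left (ha.trans ht.1) (by positivity) (by gcongr)

/-- **Logarithmic bound on the weighted integral for the translator profile.**
If `φ` solves `φ'(r) = (1+φ(r)²)(1 − (n−1)φ(r)/r)` on `[R*, ∞)` with `R* > 0` and
`φ(R*) = 0`, `αₙ = 1 − 1/√(2(n−1))`, `βₙ = αₙ/(n−1)`, then for all `r ≥ R*`:
`∫_{R*}^r t/(1+φ(t)²) dt ≤ log(1+βₙ²(r−R*)²)/(2βₙ²) + (R*/βₙ) arctan(βₙ(r−R*))`. -/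
theorem translator_profile_weighted_integral_bound
    (n : ℕ) (hn : 2 ≤ n) (Rs : ℝ) (hRs : 0 < Rs) (φ : ℝ → ℝ)
    (hode : ∀ r, Rs ≤ r →
      HasDerivAt φ ((1 + φ r ^ 2) * (1 - ((n : ℝ) - 1) * φ r / r)) r)
    (hφRs : φ Rs = 0)
    (α β : ℝ) (hα : α = 1 - 1 / Real.sqrt (2 * ((n : ℝ) - 1)))
    (hβ : β = α / ((n : ℝ) - 1)) :
    ∀ r, Rs ≤ r →
      (∫ t in Rs..r, t / (1 + φ t ^ 2)) ≤
        Real.log (1 + β ^ 2 * (r - Rs) ^ 2) / (2 * β ^ 2)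
          + (Rs / β) * Real.arctan (β * (r - Rs)) := by
  intro r hr
  have hm : (1 : ℝ) ≤ (n : ℝ) - 1 := by
    have : (2 : ℝ) ≤ n := by exact_mod_cast hn
    linarith
  have hβpos : 0 < β := hβ ▸ hα ▸ one_sub_inv_sqrt_two_mul_div_pos hm
  have hβlt : ((n : ℝ) - 1 + 1) * β < 1 :=
    hβ ▸ hα ▸ add_one_mul_one_sub_inv_sqrt_two_mul_div_lt_one hm
  have hlower : ∀ t ∈ Icc Rs r, β * (t - Rs) ≤ φ t :=
    linear_le_of_hasDerivAt_riccati hRs.le (by linarith) hβpos.le hβlt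
      (fun x hx => hode x hx.1) hφRs
  calc (∫ t in Rs..r, t / (1 + φ t ^ 2))
      ≤ ∫ t in Rs..r, t / (1 + (β * (t - Rs)) ^ 2) :=
        integral_div_one_add_sq_le_of_le hRs.le hr
          (fun x hx => (hode x hx.1).continuousAt.continuousWithinAt) (by fun_prop)
          fun t ht => ⟨mul_nonneg hβpos.le (by linarith [ht.1]), hlower t ht⟩
    _ = _ := integral_div_one_add_mul_sub_sq hβpos.ne' r
end

section
/- Let n ≥ 2 be an integer, R* > 0, and let φ : [R*,∞) → ℝ be differentiable and satisfy the translator profile ODE φ'(r) = (1+φ(r)²)(1 − (n−1)φ(r)/r) for all r ≥ R*, with φ(R*) = 0. Set α_n = 1 − 1/√(2(n−1)) and β_n = α_n/(n−1). Then for every r ≥ R*: φ(r) ≥ (r−R*)/(n−1) − √((n−1)/2) · ( log(1 + β_n²(r−R*)²)/(2β_n²) + πR*/(2β_n) )^{1/2}. -/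
/-!
A barrier argument: a function `f` with `f(R*) ≤ φ(R*)` stays below `φ` as soon as `f' < φ'`
at every point where `f` touches `φ`. The line `β (r - R*)` is such a barrier because `n β ≤ 1`.
This linear bound gives `1 + φ² ≥ X := 1 + β² (r - R*)²` where the logarithmic barrier touches
`φ`, and the logarithm is chosen so that its derivative is `(r - R*) / X`, which cancels that
factor; what remains is an AM-GM inequality.
-/

open Real

theorem le_of_hasDerivAt_lt_of_eq {f f' g g' : ℝ → ℝ} {a : ℝ}
    (hf : ∀ x, a ≤ x → HasDerivAt f (f' x) x) (hg : ∀ x, a ≤ x → HasDerivAt g (g' x) x)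
    (ha : f a ≤ g a) (hcontact : ∀ x, a ≤ x → f x = g x → f' x < g' x) :
    ∀ x, a ≤ x → f x ≤ g x := fun _ hx =>
  image_le_of_deriv_right_lt_deriv_boundary'
    (fun y hy => (hf y hy.1).continuousAt.continuousWithinAt)
    (fun y hy => (hf y hy.1).hasDerivWithinAt) ha
    (fun y hy => (hg y hy.1).continuousAt.continuousWithinAt)
    (fun y hy => (hg y hy.1).hasDerivWithinAt)
    (fun y hy => hcontact y hy.1) ⟨hx, le_rfl⟩

/-- The right-hand side of the translator profile ODE, with `m = n - 1`. -/
noncomputable def translatorField (m r p : ℝ) : ℝ := (1 + p ^ 2) * (1 - m * p / r)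

noncomputable def translatorLogPotential (β Rs r : ℝ) : ℝ :=
  log (1 + β ^ 2 * (r - Rs) ^ 2) / (2 * β ^ 2) + π * Rs / (2 * β)

noncomputable def translatorLogBarrier (m β Rs r : ℝ) : ℝ :=
  (r - Rs) / m - √(m / 2) * √(translatorLogPotential β Rs r)

lemma translatorBeta_pos_and_succ_mul_le_one {m : ℝ} (hm : 1 ≤ m) :
    0 < (1 - 1 / √(2 * m)) / m ∧ (m + 1) * ((1 - 1 / √(2 * m)) / m) ≤ 1 := by
  have hq : 1 < √(2 * m) := by
    rw [show (1 : ℝ) = √1 by simp]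
    exact Real.sqrt_lt_sqrt zero_le_one (by linarith)
  have hq_sq : √(2 * m) ^ 2 = 2 * m := Real.sq_sqrt (by linarith)
  have hβ : (1 - 1 / √(2 * m)) / m = (√(2 * m) - 1) / (√(2 * m) * m) := by
    field_simp
  rw [hβ]
  refine ⟨div_pos (by linarith) (by positivity), ?_⟩
  rw [← mul_div_assoc, div_le_one (by positivity)]
  nlinarith [sq_nonneg (√(2 * m) - 1)]

section Barriers

variable {m Rs β : ℝ} {φ : ℝ → ℝ}

lemma lt_translatorField_linear (hm : 0 < m) (hRs : 0 < Rs) (hβ : 0 < β)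
    (hmβ : (m + 1) * β ≤ 1) {r : ℝ} (hr : Rs ≤ r) :
    β < translatorField m r (β * (r - Rs)) := by
  have hr0 : 0 < r := by linarith
  set t := (r - Rs) / r
  have ht : t < 1 := by rw [div_lt_one hr0]; linarith
  have hdrift : m * (β * (r - Rs)) / r = m * β * t := by ring
  have hmβt : m * β * t < m * β := mul_lt_of_lt_one_right (by positivity) ht
  unfold translatorField
  rw [hdrift]
  nlinarith [sq_nonneg (β * (r - Rs))]

theorem linear_le_of_translator (hm : 0 < m) (hRs : 0 < Rs) (hβ : 0 < β)
    (hmβ : (m + 1) * β ≤ 1)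
    (hode : ∀ r, Rs ≤ r → HasDerivAt φ (translatorField m r (φ r)) r) (hφ : φ Rs = 0) :
    ∀ r, Rs ≤ r → β * (r - Rs) ≤ φ r :=
  le_of_hasDerivAt_lt_of_eq (f' := fun _ => β)
    (fun x _ => by simpa using ((hasDerivAt_id x).sub_const Rs).const_mul β) hode
    (by simp [hφ])
    (fun _ hr hcontact => hcontact ▸ lt_translatorField_linear hm hRs hβ hmβ hr)

lemma one_div_lt_translator_contact (hm : 1 ≤ m) (hRs : 0 < Rs) {r X u : ℝ} (hr : Rs ≤ r)
    (hX : 1 ≤ X) (hu : 0 < u) :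
    1 / m < X * ((Rs + m * u) / r) + m * (r - Rs) / (4 * u * X) := by
  have hr0 : 0 < r := by linarith
  have hXu : 0 < X * u := by positivity
  -- AM-GM: `a / r + s / (4 a) > s / r` is `(2 a - s)² + s Rs > 0` with `a = X u`, `s = r - Rs`
  have hamgm : (r - Rs) / r < X * u / r + (r - Rs) / (4 * (X * u)) := by
    have hpos : 0 < (2 * (X * u) - (r - Rs)) ^ 2 + (r - Rs) * Rs := by
      rcases (sub_nonneg.2 hr).eq_or_lt with hs | hs
      · rw [← hs]
        nlinarith [mul_pos hXu hXu]
      · exact add_pos_of_nonneg_of_pos (sq_nonneg _) (mul_pos hs hRs)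
    rw [div_add_div _ _ hr0.ne' (by positivity), div_lt_div_iff₀ hr0 (by positivity)]
    nlinarith [mul_pos hr0 hpos]
  calc 1 / m ≤ 1 := div_le_one_of_le₀ hm (by linarith)
    _ = Rs / r + (r - Rs) / r := by field_simp; ring
    _ < Rs / r + (X * u / r + (r - Rs) / (4 * (X * u))) := by linarith
    _ ≤ X * Rs / r + m * (X * u / r + (r - Rs) / (4 * (X * u))) := by
      gcongr
      · exact le_mul_of_one_le_left hRs.le hX
      · exact le_mul_of_one_le_left (by positivity) hm
    _ = X * ((Rs + m * u) / r) + m * (r - Rs) / (4 * u * X) := by ring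

lemma translatorLogPotential_pos (hRs : 0 < Rs) (hβ : 0 < β) (r : ℝ) :
    0 < translatorLogPotential β Rs r := by
  have hlog : 0 ≤ log (1 + β ^ 2 * (r - Rs) ^ 2) :=
    Real.log_nonneg (le_add_of_nonneg_right (by positivity))
  unfold translatorLogPotential
  have := pi_pos
  positivity

lemma hasDerivAt_translatorLogPotential (hβ : β ≠ 0) (r : ℝ) :
    HasDerivAt (translatorLogPotential β Rs)
      ((r - Rs) / (1 + β ^ 2 * (r - Rs) ^ 2)) r := by
  have hX : 1 + β ^ 2 * (r - Rs) ^ 2 ≠ 0 := by positivity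
  have hquad : HasDerivAt (fun x => 1 + β ^ 2 * (x - Rs) ^ 2) (β ^ 2 * (2 * (r - Rs))) r := by
    simpa using ((((hasDerivAt_id r).sub_const Rs).pow 2).const_mul (β ^ 2)).const_add 1
  refine (((hquad.log hX).div_const (2 * β ^ 2)).add_const (π * Rs / (2 * β))).congr_deriv ?_
  field_simp

lemma hasDerivAt_translatorLogBarrier (hRs : 0 < Rs) (hβ : 0 < β) (r : ℝ) :
    HasDerivAt (translatorLogBarrier m β Rs)
      (1 / m - √(m / 2) * ((r - Rs) / (1 + β ^ 2 * (r - Rs) ^ 2) /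
        (2 * √(translatorLogPotential β Rs r)))) r := by
  have hshift : HasDerivAt (fun x => (x - Rs) / m) (1 / m) r := by
    simpa using ((hasDerivAt_id r).sub_const Rs).div_const m
  exact hshift.sub (((hasDerivAt_translatorLogPotential hβ.ne' r).sqrt
    (translatorLogPotential_pos hRs hβ r).ne').const_mul _)

theorem translatorLogBarrier_le_of_translator (hm : 1 ≤ m) (hRs : 0 < Rs) (hβ : 0 < β)
    (hmβ : (m + 1) * β ≤ 1)
    (hode : ∀ r, Rs ≤ r → HasDerivAt φ (translatorField m r (φ r)) r) (hφ : φ Rs = 0) :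
    ∀ r, Rs ≤ r → translatorLogBarrier m β Rs r ≤ φ r := by
  have hlin := linear_le_of_translator (by linarith) hRs hβ hmβ hode hφ
  refine le_of_hasDerivAt_lt_of_eq (fun x _ => hasDerivAt_translatorLogBarrier hRs hβ x)
    hode ?_ ?_
  · simp only [translatorLogBarrier, sub_self, zero_div, zero_sub, hφ, neg_nonpos]
    positivity
  intro r hr hcontact
  set X := 1 + β ^ 2 * (r - Rs) ^ 2
  set L := translatorLogPotential β Rs r
  set u := √(m / 2) * √L
  have hL : 0 < √L := Real.sqrt_pos.2 (translatorLogPotential_pos hRs hβ r)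
  have hu : 0 < u := mul_pos (Real.sqrt_pos.2 (by linarith)) hL
  have hφr : φ r = (r - Rs) / m - u := hcontact.symm
  have hr0 : 0 < r := by linarith
  have hX : X ≤ 1 + φ r ^ 2 := by
    nlinarith [hlin r hr, mul_nonneg hβ.le (sub_nonneg.2 hr)]
  have hfield : X * ((Rs + m * u) / r) ≤ translatorField m r (φ r) := by
    have hdrift : 1 - m * φ r / r = (Rs + m * u) / r := by
      rw [hφr]; field_simp; ring
    rw [translatorField, hdrift]
    have hmu : 0 < m * u := mul_pos (by linarith) hu
    exact mul_le_mul_of_nonneg_right hX (div_nonneg (by linarith) hr0.le)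
  have hslope : √(m / 2) * ((r - Rs) / X / (2 * √L)) = m * (r - Rs) / (4 * u * X) := by
    have hc : √(m / 2) * √(m / 2) = m / 2 := Real.mul_self_sqrt (by linarith)
    have hm2 : m = 2 * (√(m / 2) * √(m / 2)) := by rw [hc]; ring
    conv_rhs => rw [hm2]
    have hc0 : √(m / 2) ≠ 0 := (Real.sqrt_pos.2 (by linarith)).ne'
    simp only [u]
    field_simp
    ring
  have hX1 : 1 ≤ X := le_add_of_nonneg_right (by positivity)
  have := one_div_lt_translator_contact hm hRs hr hX1 hu
  linarith

end Barriers

/-- **Refined logarithmic lower bound for the translator profile ODE.**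
If `φ` solves `φ'(r) = (1+φ(r)²)(1 − (n−1)φ(r)/r)` on `[R*, ∞)` with `R* > 0` and
`φ(R*) = 0`, `αₙ = 1 − 1/√(2(n−1))`, `βₙ = αₙ/(n−1)`, then for all `r ≥ R*`:
`φ(r) ≥ (r−R*)/(n−1) − √((n−1)/2) (log(1+βₙ²(r−R*)²)/(2βₙ²) + πR*/(2βₙ))^{1/2}`. -/
theorem translator_profile_refined_log_bound
    (n : ℕ) (hn : 2 ≤ n) (Rs : ℝ) (hRs : 0 < Rs) (φ : ℝ → ℝ)
    (hode : ∀ r, Rs ≤ r →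
      HasDerivAt φ ((1 + φ r ^ 2) * (1 - ((n : ℝ) - 1) * φ r / r)) r)
    (hφRs : φ Rs = 0)
    (α β : ℝ) (hα : α = 1 - 1 / Real.sqrt (2 * ((n : ℝ) - 1)))
    (hβ : β = α / ((n : ℝ) - 1)) :
    ∀ r, Rs ≤ r →
      (r - Rs) / ((n : ℝ) - 1)
        - Real.sqrt (((n : ℝ) - 1) / 2) *
            Real.sqrt (Real.log (1 + β ^ 2 * (r - Rs) ^ 2) / (2 * β ^ 2)
              + Real.pi * Rs / (2 * β)) ≤ φ r := by
  have hm : 1 ≤ (n : ℝ) - 1 := by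
    have : (2 : ℝ) ≤ n := by exact_mod_cast hn
    linarith
  obtain ⟨hβ_pos, hmβ⟩ := translatorBeta_pos_and_succ_mul_le_one hm
  subst hα hβ
  exact translatorLogBarrier_le_of_translator hm hRs hβ_pos hmβ hode hφRs
end

section
/- Let n ≥ 2 be an integer, R* > 0, and let φ : [R*,∞) → ℝ be differentiable and satisfy the translator profile ODE φ'(r) = (1+φ(r)²)(1 − (n−1)φ(r)/r) for all r ≥ R*, with φ(R*) = 0. Set α_n = 1 − 1/√(2(n−1)). Then for every r ≥ R*: φ(r) ≥ (r−R*)/(n−1) − 2/(α_n²·r) − 3R*/(n−1) ≥ (r−4R*)/(n−1) − 24/r. -/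
/-!
Write `m = n - 1`. Two barrier arguments, both by comparison at a first contact point.
First, `φ` stays above the line `α (r - R*) / m`: at a contact the line's slope `α / m ≤ 1 - α`
is smaller than `φ' ≥ 1 - m φ / r = 1 - α (r - R*) / r`. Second, the linear bound makes `φ²`
large enough to push `r / m - φ` below `2 R* / m + 2 / (α² r)`: at a contact
`1 - m φ / r = (2 R* α² r + 2 m) / (α² r²)`, and multiplying by `1 + φ² ≥ 1 + α² (r - R*)² / m²`
makes `φ'` exceed `1 / m + 2 / (α² r²)`. Finally `α_n ≥ 1 - 1/√2` gives `α_n² ≥ 1/12`.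
-/

theorem image_le_of_hasDerivAt_lt_deriv_boundary_Ici {f f' B B' : ℝ → ℝ} {a : ℝ}
    (hf : ∀ x, a ≤ x → HasDerivAt f (f' x) x) (hB : ∀ x, a ≤ x → HasDerivAt B (B' x) x)
    (ha : f a ≤ B a) (bound : ∀ x, a ≤ x → f x = B x → f' x < B' x) :
    ∀ x, a ≤ x → f x ≤ B x := fun _ hx =>
  image_le_of_deriv_right_lt_deriv_boundary'
    (fun y hy => (hf y hy.1).continuousAt.continuousWithinAt)
    (fun y hy => (hf y hy.1).hasDerivWithinAt) ha
    (fun y hy => (hB y hy.1).continuousAt.continuousWithinAt)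
    (fun y hy => (hB y hy.1).hasDerivWithinAt)
    (fun y hy => bound y hy.1) ⟨hx, le_rfl⟩

/-- The paper's `α_n`, as a function of `m = n - 1`. -/
noncomputable def translatorAlpha (m : ℝ) : ℝ := 1 - 1 / Real.sqrt (2 * m)

section translatorAlpha

variable {m : ℝ}

theorem one_div_sqrt_two_mul_sq (hm : 0 < m) : (1 / Real.sqrt (2 * m)) ^ 2 * (2 * m) = 1 := by
  rw [div_pow, Real.sq_sqrt (by positivity)]
  field_simp

theorem translatorAlpha_pos (hm : 1 / 2 < m) : 0 < translatorAlpha m := by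
  unfold translatorAlpha
  rw [sub_pos, div_lt_one (by positivity), Real.lt_sqrt zero_le_one]
  linarith

theorem translatorAlpha_le_one_sub_mul (hm : 0 < m) :
    translatorAlpha m ≤ (1 - translatorAlpha m) * m := by
  have ht := one_div_sqrt_two_mul_sq hm
  have ht0 : 0 < 1 / Real.sqrt (2 * m) := by positivity
  unfold translatorAlpha
  nlinarith [sq_nonneg (1 / Real.sqrt (2 * m) * (m + 1) - 1), sq_nonneg (m - 1)]

theorem one_div_twelve_le_translatorAlpha_sq (hm : 1 ≤ m) : 1 / 12 ≤ translatorAlpha m ^ 2 := by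
  have ht := one_div_sqrt_two_mul_sq (by linarith : 0 < m)
  have ht0 : 0 < 1 / Real.sqrt (2 * m) := by positivity
  -- `t := 1 / √(2m)` has `t² ≤ 1/2`, so `t ≤ 17/24` and `(1 - t)² ≥ (7/24)² > 1/12`.
  have htle : 1 / Real.sqrt (2 * m) ≤ 17 / 24 := by nlinarith
  unfold translatorAlpha
  nlinarith

end translatorAlpha

section TranslatorProfile

variable {m R α : ℝ} {φ : ℝ → ℝ}

theorem translator_profile_linear_lower_bound_s10 (hm : 0 < m) (hR : 0 < R)
    (hode : ∀ r, R ≤ r → HasDerivAt φ ((1 + φ r ^ 2) * (1 - m * φ r / r)) r)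
    (hφR : φ R = 0) (hα : 0 < α) (hαm : α ≤ (1 - α) * m) :
    ∀ r, R ≤ r → α * (r - R) / m ≤ φ r := by
  refine image_le_of_hasDerivAt_lt_deriv_boundary_Ici (f' := fun _ => α / m)
    (fun x _ => by simpa using (((hasDerivAt_id x).sub_const R).const_mul α).div_const m)
    hode (by simp [hφR]) fun x hx hcontact => ?_
  have hx0 : 0 < x := hR.trans_le hx
  rw [← hcontact, mul_div_cancel₀ _ hm.ne']
  have hslope : α / m ≤ 1 - α := by rw [div_le_iff₀ hm]; linarith
  have hα1 : α < 1 := by linarith [div_pos hα hm]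
  have hratio : α * (x - R) / x < α := by rw [div_lt_iff₀ hx0]; nlinarith
  calc α / m ≤ 1 - α := hslope
    _ < 1 - α * (x - R) / x := by linarith
    _ ≤ (1 + (α * (x - R) / m) ^ 2) * (1 - α * (x - R) / x) :=
      le_mul_of_one_le_left (by linarith) (by nlinarith [sq_nonneg (α * (x - R) / m)])

theorem translator_barrier_contact_ineq {x p : ℝ} (hm : 1 ≤ m) (hR : 0 < R) (hx : R ≤ x)
    (hα : 0 < α) (hp : α * (x - R) ≤ m * p) :
    α ^ 2 * x ^ 2 + 2 * m < m * (1 + p ^ 2) * (2 * R * α ^ 2 * x + 2 * m) := by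
  have hx0 : 0 < x := hR.trans_le hx
  have hsq : (α * (x - R)) ^ 2 ≤ (m * p) ^ 2 :=
    pow_le_pow_left₀ (mul_nonneg hα.le (by linarith)) hp 2
  -- `2 α² (x - R)² + 2 R α² x = α² x² + α² ((x - R)² + R²)`
  nlinarith [mul_pos (mul_pos hα hα) (add_pos_of_nonneg_of_pos (sq_nonneg (x - R)) (mul_pos hR hR)),
    mul_nonneg (mul_nonneg (sq_nonneg p) (by linarith : (0:ℝ) ≤ m))
      (by positivity : 0 ≤ 2 * R * α ^ 2 * x),
    mul_nonneg (by linarith : (0:ℝ) ≤ m - 1) (by positivity : 0 ≤ 2 * R * α ^ 2 * x + 2 * m)]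

theorem translator_profile_lower_bound (hm : 1 ≤ m) (hR : 0 < R)
    (hode : ∀ r, R ≤ r → HasDerivAt φ ((1 + φ r ^ 2) * (1 - m * φ r / r)) r)
    (hφR : φ R = 0) (hα : 0 < α) (hαm : α ≤ (1 - α) * m) :
    ∀ r, R ≤ r → (r - 2 * R) / m - 2 / (α ^ 2 * r) ≤ φ r := by
  have hm0 : 0 < m := by linarith
  have hlin := translator_profile_linear_lower_bound_s10 hm0 hR hode hφR hα hαm
  have hbound : ∀ r, R ≤ r → r / m - φ r ≤ 2 * R / m + 2 / α ^ 2 * r⁻¹ := by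
    refine image_le_of_hasDerivAt_lt_deriv_boundary_Ici
      (fun x hx => ((hasDerivAt_id x).div_const m).sub (hode x hx))
      (fun x hx => ((hasDerivAt_inv (hR.trans_le hx).ne').const_mul _).const_add _)
      ?_ fun x hx hcontact => ?_
    · rw [hφR, sub_zero]
      have : 0 ≤ 2 / α ^ 2 * R⁻¹ := by positivity
      have : R / m ≤ 2 * R / m := by gcongr; linarith
      linarith
    have hx0 : 0 < x := hR.trans_le hx
    have hfactor : 1 - m * φ x / x = (2 * R * α ^ 2 * x + 2 * m) / (α ^ 2 * x ^ 2) := by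
      field_simp at hcontact
      rw [eq_div_iff (by positivity)]
      field_simp
      linear_combination hcontact
    have hp : α * (x - R) ≤ m * φ x := by
      have := hlin x hx
      rw [div_le_iff₀ hm0] at this
      linarith
    have hgap := translator_barrier_contact_ineq hm hR hx hα hp
    rw [hfactor, ← sub_pos]
    have hdiff : 2 / α ^ 2 * -(x ^ 2)⁻¹ - (1 / m - (1 + φ x ^ 2) *
          ((2 * R * α ^ 2 * x + 2 * m) / (α ^ 2 * x ^ 2))) =
        (m * (1 + φ x ^ 2) * (2 * R * α ^ 2 * x + 2 * m) - (α ^ 2 * x ^ 2 + 2 * m)) /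
          (m * α ^ 2 * x ^ 2) := by
      field_simp
      ring
    rw [hdiff]
    exact div_pos (by linarith) (by positivity)
  intro r hr
  have := hbound r hr
  rw [sub_div, div_mul_eq_div_div, div_eq_mul_inv _ r]
  linarith

end TranslatorProfile

/-- **Refined lower bound with `1/r` correction for the translator profile ODE.**
If `φ` solves `φ'(r) = (1+φ(r)²)(1 − (n−1)φ(r)/r)` on `[R*, ∞)` with `R* > 0` and
`φ(R*) = 0`, `αₙ = 1 − 1/√(2(n−1))`, then for all `r ≥ R*`:
`φ(r) ≥ (r−R*)/(n−1) − 2/(αₙ² r) − 3R*/(n−1) ≥ (r−4R*)/(n−1) − 24/r`. -/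
theorem translator_profile_refined_bound
    (n : ℕ) (hn : 2 ≤ n) (Rs : ℝ) (hRs : 0 < Rs) (φ : ℝ → ℝ)
    (hode : ∀ r, Rs ≤ r →
      HasDerivAt φ ((1 + φ r ^ 2) * (1 - ((n : ℝ) - 1) * φ r / r)) r)
    (hφRs : φ Rs = 0)
    (α : ℝ) (hα : α = 1 - 1 / Real.sqrt (2 * ((n : ℝ) - 1))) :
    ∀ r, Rs ≤ r →
      (r - Rs) / ((n : ℝ) - 1) - 2 / (α ^ 2 * r) - 3 * Rs / ((n : ℝ) - 1) ≤ φ r ∧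
      (r - 4 * Rs) / ((n : ℝ) - 1) - 24 / r ≤
        (r - Rs) / ((n : ℝ) - 1) - 2 / (α ^ 2 * r) - 3 * Rs / ((n : ℝ) - 1) := by
  intro r hr
  have hm : 1 ≤ (n : ℝ) - 1 := by
    have : (2 : ℝ) ≤ n := by exact_mod_cast hn
    linarith
  have hm0 : 0 < (n : ℝ) - 1 := by linarith
  have hα' : α = translatorAlpha ((n : ℝ) - 1) := hα
  subst hα'
  have hα0 := translatorAlpha_pos (by linarith : (1 : ℝ) / 2 < (n : ℝ) - 1)
  have hbound := translator_profile_lower_bound hm hRs hode hφRs hα0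
    (translatorAlpha_le_one_sub_mul hm0) r hr
  have hr0 : 0 < r := hRs.trans_le hr
  have hshift : (r - Rs) / ((n : ℝ) - 1) - 3 * Rs / ((n : ℝ) - 1) =
      (r - 2 * Rs) / ((n : ℝ) - 1) - 2 * Rs / ((n : ℝ) - 1) := by ring
  have hRm : 0 ≤ 2 * Rs / ((n : ℝ) - 1) := by positivity
  have hcorr : 2 / (translatorAlpha ((n : ℝ) - 1) ^ 2 * r) ≤ 24 / r := by
    rw [div_le_div_iff₀ (by positivity) hr0]
    nlinarith [one_div_twelve_le_translatorAlpha_sq hm]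
  constructor
  · linarith
  · have : (r - 4 * Rs) / ((n : ℝ) - 1) = (r - Rs) / ((n : ℝ) - 1) - 3 * Rs / ((n : ℝ) - 1) := by
      ring
    linarith
end

section
/- Let n ≥ 2 be an integer, R > 0, and let ρ : [0,∞) → ℝ be twice differentiable with ρ(x) > 0 for all x ≥ 0, ρ(0) = R, ρ'(0) = 0, satisfying the inverse-profile translator ODE ρ''(x) + (1+ρ'(x)²)·ρ'(x) = (n−1)(1+ρ'(x)²)/ρ(x) for all x ≥ 0. Then for every x ≥ 0: ρ'(x) ≥ ((n−1)/ρ(x))·(1 − e^{−x}). -/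
/-!
Set `w = ρ ρ' - (n - 1)(1 - e^{-x})`, so that the claim is `w ≥ 0`. The ODE gives
`w' + (1 + ρ'²) w = ρ'² (1 + (n - 1) e^{-x}) ≥ 0`, and `w(0) = 0`; multiplying by the
integrating factor `exp ∫₀ˣ (1 + ρ'²)` turns this into monotonicity, hence `w ≥ 0`.
-/

open Real Set

theorem nonneg_of_hasDerivAt_add_mul_nonneg {a b : ℝ} (hab : a ≤ b) {w w' g : ℝ → ℝ}
    (hg : ContinuousOn g (Icc a b)) (hw : ContinuousOn w (Icc a b))
    (hw' : ∀ t ∈ Ioo a b, HasDerivAt w (w' t) t)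
    (hineq : ∀ t ∈ Ioo a b, 0 ≤ w' t + g t * w t) (ha : 0 ≤ w a) : 0 ≤ w b := by
  set E : ℝ → ℝ := fun u => ∫ t in a..u, g t
  have hE : ContinuousOn E (Icc a b) := by
    have hg_int : MeasureTheory.IntegrableOn g (uIcc a b) := by
      rw [uIcc_of_le hab]; exact hg.integrableOn_Icc
    simpa only [uIcc_of_le hab] using intervalIntegral.continuousOn_primitive_interval hg_int
  have hE' : ∀ t ∈ Ioo a b, HasDerivAt E (g t) t := fun t ht =>
    intervalIntegral.integral_hasDerivAt_right
      ((hg.mono (Icc_subset_Icc le_rfl ht.2.le)).intervalIntegrable_of_Icc ht.1.le)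
      ((hg.mono Ioo_subset_Icc_self).stronglyMeasurableAtFilter isOpen_Ioo t ht)
      (hg.continuousAt (Icc_mem_nhds ht.1 ht.2))
  have hmono : MonotoneOn (fun t => w t * exp (E t)) (Icc a b) := by
    refine monotoneOn_of_hasDerivWithinAt_nonneg (convex_Icc a b)
      (f' := fun t => w' t * exp (E t) + w t * (exp (E t) * g t)) (hw.mul hE.rexp)
      (fun t ht => ?_) (fun t ht => ?_)
    · rw [interior_Icc] at ht
      exact ((hw' t ht).mul (hE' t ht).exp).hasDerivWithinAt
    · rw [interior_Icc] at ht
      linarith [mul_nonneg (hineq t ht) (exp_pos (E t)).le]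
  have h := hmono (left_mem_Icc.2 hab) (right_mem_Icc.2 hab) hab
  simp only [E, intervalIntegral.integral_same, exp_zero, mul_one] at h
  exact (mul_nonneg_iff_of_pos_right (exp_pos _)).1 (ha.trans h)

theorem hasDerivAt_mul_sub_mul_one_sub_exp {c t : ℝ} {ρ ρ' : ℝ → ℝ} (hρt : ρ t ≠ 0)
    (hρ : HasDerivAt ρ (ρ' t) t)
    (hρ' : HasDerivAt ρ' (c * (1 + ρ' t ^ 2) / ρ t - (1 + ρ' t ^ 2) * ρ' t) t) :
    HasDerivAt (fun s => ρ s * ρ' s - c * (1 - exp (-s)))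
      (ρ' t ^ 2 * (1 + c * exp (-t)) - (1 + ρ' t ^ 2) * (ρ t * ρ' t - c * (1 - exp (-t)))) t := by
  have hexp : HasDerivAt (fun s => c * (1 - exp (-s))) (c * exp (-t)) t := by
    simpa using (((hasDerivAt_neg t).exp).const_sub 1).const_mul c
  refine ((hρ.mul hρ').sub hexp).congr_deriv ?_
  field_simp
  ring

theorem div_mul_one_sub_exp_le_of_translator_ode {c : ℝ} (hc : -1 ≤ c) {ρ ρ' : ℝ → ℝ}
    (hpos : ∀ t, 0 ≤ t → 0 < ρ t) (hρ : ∀ t, 0 ≤ t → HasDerivAt ρ (ρ' t) t)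
    (hode : ∀ t, 0 ≤ t →
      HasDerivAt ρ' (c * (1 + ρ' t ^ 2) / ρ t - (1 + ρ' t ^ 2) * ρ' t) t)
    (hρ'0 : ρ' 0 = 0) {x : ℝ} (hx : 0 ≤ x) : c / ρ x * (1 - exp (-x)) ≤ ρ' x := by
  have hw (t : ℝ) (ht : 0 ≤ t) :=
    hasDerivAt_mul_sub_mul_one_sub_exp (hpos t ht).ne' (hρ t ht) (hode t ht)
  have hforcing (t : ℝ) (ht : 0 ≤ t) : 0 ≤ ρ' t ^ 2 * (1 + c * exp (-t)) := by
    have := exp_le_one_iff.2 (neg_nonpos.2 ht)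
    have := exp_pos (-t)
    exact mul_nonneg (sq_nonneg _) (by nlinarith)
  have hwx : 0 ≤ ρ x * ρ' x - c * (1 - exp (-x)) := by
    refine nonneg_of_hasDerivAt_add_mul_nonneg hx (g := fun t => 1 + ρ' t ^ 2)
      (fun t ht => (((hode t ht.1).continuousAt.pow 2).const_add 1).continuousWithinAt)
      (fun t ht => (hw t ht.1).continuousAt.continuousWithinAt) (fun t ht => hw t ht.1.le)
      (fun t ht => ?_) (by simp [hρ'0])
    rw [sub_add_cancel]
    exact hforcing t ht.1.le
  rw [div_mul_eq_mul_div, div_le_iff₀ (hpos x hx)]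
  linarith

theorem winglike_upper_branch_derivative_bound_general
    (n : ℕ) (ρ ρ' : ℝ → ℝ)
    (hpos : ∀ x, 0 ≤ x → 0 < ρ x)
    (hρ : ∀ x, 0 ≤ x → HasDerivAt ρ (ρ' x) x)
    (hode : ∀ x, 0 ≤ x →
      HasDerivAt ρ' (((n : ℝ) - 1) * (1 + ρ' x ^ 2) / ρ x - (1 + ρ' x ^ 2) * ρ' x) x)
    (hρ'0 : ρ' 0 = 0) :
    ∀ x, 0 ≤ x → ((n : ℝ) - 1) / ρ x * (1 - Real.exp (-x)) ≤ ρ' x :=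
  fun _ hx => div_mul_one_sub_exp_le_of_translator_ode
    (by linarith [n.cast_nonneg (α := ℝ)]) hpos hρ hode hρ'0 hx

/-- **Derivative lower bound for the upper-branch radius of a winglike translator.**
If `ρ > 0` solves `ρ'' + (1+ρ'²)ρ' = (n−1)(1+ρ'²)/ρ` on `[0, ∞)` with `ρ(0) = R > 0`
and `ρ'(0) = 0`, then `ρ'(x) ≥ ((n−1)/ρ(x))(1 − e^{−x})` for all `x ≥ 0`. -/
theorem winglike_upper_branch_derivative_bound
    (n : ℕ) (hn : 2 ≤ n) (R : ℝ) (hR : 0 < R) (ρ ρ' : ℝ → ℝ)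
    (hpos : ∀ x, 0 ≤ x → 0 < ρ x)
    (hρ : ∀ x, 0 ≤ x → HasDerivAt ρ (ρ' x) x)
    (hode : ∀ x, 0 ≤ x →
      HasDerivAt ρ' (((n : ℝ) - 1) * (1 + ρ' x ^ 2) / ρ x - (1 + ρ' x ^ 2) * ρ' x) x)
    (hρ0 : ρ 0 = R) (hρ'0 : ρ' 0 = 0) :
    ∀ x, 0 ≤ x → ((n : ℝ) - 1) / ρ x * (1 - Real.exp (-x)) ≤ ρ' x :=
  winglike_upper_branch_derivative_bound_general n ρ ρ' hpos hρ hode hρ'0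
end

section
/- Let n ≥ 2 be an integer, R > 0, and let ρ : [0,∞) → ℝ be twice differentiable with ρ(x) > 0 for all x ≥ 0, ρ(0) = R, ρ'(0) = 0, satisfying the inverse-profile translator ODE ρ''(x) + (1+ρ'(x)²)·ρ'(x) = (n−1)(1+ρ'(x)²)/ρ(x) for all x ≥ 0. Then for every x ≥ 0: ρ(x) ≥ √( 2(n−1)(x − 1 + e^{−x}) + R² ); consequently x ≤ (ρ(x)² − R²)/(2(n−1)) + 1. -/
/-!
Along the branch, `v = ρ ρ'` satisfies `v' = ρ'² + (1 + ρ'²)(n - 1 - v)`, so `w = n - 1 - v`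
decays at least like `e^{-x}` while it is nonnegative: `w' ≤ -w`. A barrier argument gives
`ρ ρ' ≥ (n - 1)(1 - e^{-x})`, and integrating this (again by comparison) yields
`ρ² ≥ R² + 2(n - 1)(x - 1 + e^{-x})`. The height bound follows because `e^{-x} > 0`.
-/

open Real

theorem le_mul_exp_neg_of_deriv_le_neg {f f' : ℝ → ℝ}
    (hf : ∀ x, 0 ≤ x → HasDerivAt f (f' x) x) (h0 : 0 ≤ f 0)
    (hdecay : ∀ x, 0 ≤ x → 0 ≤ f x → f' x ≤ -f x) :
    ∀ x, 0 ≤ x → f x ≤ f 0 * exp (-x) := by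
  intro x hx
  refine le_of_forall_pos_le_add fun ε hε => ?_
  -- the barrier `f 0 * exp (-x) + ε` makes the boundary condition strict
  refine image_le_of_deriv_right_lt_deriv_boundary (f' := f') (B := fun y => f 0 * exp (-y) + ε)
    (B' := fun y => -(f 0 * exp (-y)))
    (fun y hy => (hf y hy.1).continuousAt.continuousWithinAt)
    (fun y hy => (hf y hy.1).hasDerivWithinAt) (by rw [neg_zero, exp_zero, mul_one]; linarith)
    (fun y => ?_) (fun y hy hfy => ?_) ⟨hx, le_rfl⟩
  · simpa using (((hasDerivAt_neg y).exp).const_mul (f 0)).add_const ε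
  · have := hdecay y hy.1 (by rw [hfy]; positivity)
    linarith

section TranslatorODE

variable {k : ℝ} {ρ ρ' : ℝ → ℝ}

theorem hasDerivAt_mul_of_translator_ode {x : ℝ} (hρx : ρ x ≠ 0)
    (hρ : HasDerivAt ρ (ρ' x) x)
    (hode : HasDerivAt ρ' (k * (1 + ρ' x ^ 2) / ρ x - (1 + ρ' x ^ 2) * ρ' x) x) :
    HasDerivAt (fun y => ρ y * ρ' y) (ρ' x ^ 2 + (1 + ρ' x ^ 2) * (k - ρ x * ρ' x)) x := by
  refine (hρ.mul hode).congr_deriv ?_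
  field_simp

theorem mul_one_sub_exp_neg_le_mul_of_translator_ode (hk : 0 ≤ k)
    (hpos : ∀ x, 0 ≤ x → 0 < ρ x)
    (hρ : ∀ x, 0 ≤ x → HasDerivAt ρ (ρ' x) x)
    (hode : ∀ x, 0 ≤ x →
      HasDerivAt ρ' (k * (1 + ρ' x ^ 2) / ρ x - (1 + ρ' x ^ 2) * ρ' x) x)
    (hρ'0 : ρ' 0 = 0) :
    ∀ x, 0 ≤ x → k * (1 - exp (-x)) ≤ ρ x * ρ' x := by
  have hderiv : ∀ x, 0 ≤ x → HasDerivAt (fun y => k - ρ y * ρ' y)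
      (-(ρ' x ^ 2 + (1 + ρ' x ^ 2) * (k - ρ x * ρ' x))) x := fun x hx =>
    ((hasDerivAt_mul_of_translator_ode (hpos x hx).ne' (hρ x hx) (hode x hx)).const_sub k)
  have hdecay := le_mul_exp_neg_of_deriv_le_neg hderiv (by simpa [hρ'0] using hk)
    fun x _ hw => by nlinarith [sq_nonneg (ρ' x), mul_nonneg (sq_nonneg (ρ' x)) hw]
  intro x hx
  have := hdecay x hx
  simp only [hρ'0, mul_zero, sub_zero] at this
  linarith

theorem add_sq_le_sq_of_translator_ode (hk : 0 ≤ k)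
    (hpos : ∀ x, 0 ≤ x → 0 < ρ x)
    (hρ : ∀ x, 0 ≤ x → HasDerivAt ρ (ρ' x) x)
    (hode : ∀ x, 0 ≤ x →
      HasDerivAt ρ' (k * (1 + ρ' x ^ 2) / ρ x - (1 + ρ' x ^ 2) * ρ' x) x)
    (hρ'0 : ρ' 0 = 0) :
    ∀ x, 0 ≤ x → 2 * k * (x - 1 + exp (-x)) + ρ 0 ^ 2 ≤ ρ x ^ 2 := by
  have hlow := mul_one_sub_exp_neg_le_mul_of_translator_ode hk hpos hρ hode hρ'0
  have hcomparison : ∀ x, HasDerivAt (fun y => k * (y - 1 + exp (-y))) (k * (1 - exp (-x))) x :=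
    fun x => by simpa [sub_eq_add_neg] using
      ((((hasDerivAt_id x).sub_const 1).add (hasDerivAt_neg x).exp).const_mul k)
  have hhalf_sq : ∀ x, 0 ≤ x →
      HasDerivAt (fun y => (ρ y ^ 2 - ρ 0 ^ 2) / 2) (ρ x * ρ' x) x := fun x hx =>
    ((((hρ x hx).pow 2).sub_const (ρ 0 ^ 2)).div_const 2).congr_deriv (by ring)
  intro x hx
  have := image_le_of_deriv_right_le_deriv_boundary
    (fun y _ => (hcomparison y).continuousAt.continuousWithinAt)
    (fun y _ => (hcomparison y).hasDerivWithinAt) (by simp)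
    (fun y hy => (hhalf_sq y hy.1).continuousAt.continuousWithinAt)
    (fun y hy => (hhalf_sq y hy.1).hasDerivWithinAt) (fun y hy => hlow y hy.1) ⟨hx, le_rfl⟩
  linarith

end TranslatorODE

theorem winglike_upper_branch_radius_bound_general
    (n : ℕ) (hn : 2 ≤ n) (R : ℝ) (ρ ρ' : ℝ → ℝ)
    (hpos : ∀ x, 0 ≤ x → 0 < ρ x)
    (hρ : ∀ x, 0 ≤ x → HasDerivAt ρ (ρ' x) x)
    (hode : ∀ x, 0 ≤ x →
      HasDerivAt ρ' (((n : ℝ) - 1) * (1 + ρ' x ^ 2) / ρ x - (1 + ρ' x ^ 2) * ρ' x) x)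
    (hρ0 : ρ 0 = R) (hρ'0 : ρ' 0 = 0) :
    ∀ x, 0 ≤ x →
      Real.sqrt (2 * ((n : ℝ) - 1) * (x - 1 + Real.exp (-x)) + R ^ 2) ≤ ρ x ∧
      x ≤ (ρ x ^ 2 - R ^ 2) / (2 * ((n : ℝ) - 1)) + 1 := by
  have hk : (0 : ℝ) < n - 1 := by
    have : (2 : ℝ) ≤ n := by exact_mod_cast hn
    linarith
  intro x hx
  have hsq := hρ0 ▸ add_sq_le_sq_of_translator_ode hk.le hpos hρ hode hρ'0 x hx
  constructor
  · exact (Real.sqrt_le_left (hpos x hx).le).2 hsq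
  · rw [← sub_le_iff_le_add, le_div_iff₀ (by positivity)]
    nlinarith [mul_pos hk (exp_pos (-x))]

/-- **Radius lower bound and height bound for the upper branch of a winglike translator.**
If `ρ > 0` solves `ρ'' + (1+ρ'²)ρ' = (n−1)(1+ρ'²)/ρ` on `[0, ∞)` with `ρ(0) = R > 0`
and `ρ'(0) = 0`, then `ρ(x) ≥ √(2(n−1)(x−1+e^{−x}) + R²)` and consequently
`x ≤ (ρ(x)² − R²)/(2(n−1)) + 1`, for all `x ≥ 0`. -/
theorem winglike_upper_branch_radius_bound
    (n : ℕ) (hn : 2 ≤ n) (R : ℝ) (hR : 0 < R) (ρ ρ' : ℝ → ℝ)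
    (hpos : ∀ x, 0 ≤ x → 0 < ρ x)
    (hρ : ∀ x, 0 ≤ x → HasDerivAt ρ (ρ' x) x)
    (hode : ∀ x, 0 ≤ x →
      HasDerivAt ρ' (((n : ℝ) - 1) * (1 + ρ' x ^ 2) / ρ x - (1 + ρ' x ^ 2) * ρ' x) x)
    (hρ0 : ρ 0 = R) (hρ'0 : ρ' 0 = 0) :
    ∀ x, 0 ≤ x →
      Real.sqrt (2 * ((n : ℝ) - 1) * (x - 1 + Real.exp (-x)) + R ^ 2) ≤ ρ x ∧
      x ≤ (ρ x ^ 2 - R ^ 2) / (2 * ((n : ℝ) - 1)) + 1 :=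
  winglike_upper_branch_radius_bound_general n hn R ρ ρ' hpos hρ hode hρ0 hρ'0
end

section
/- Let n ≥ 5 be an integer and R* > 0, and define τ : [R*,∞) → ℝ by τ(r) = (r−R*)²/(2(n−1)) − (1/2)·log(1 + (r−R*)²). Then τ is a subsolution of the translator profile equation on [R*,∞); that is, for every r ≥ R*: τ''(r) ≤ (1 + τ'(r)²)·(1 − (n−1)·τ'(r)/r). -/
/-!
Write `m = n - 1`, `s = r - R*` and `u = 1 + s²`, so that `τ' = s (u - m) / (m u)` and
`τ'' = 1/m - (1 - s²)/u²`. Where `τ' ≤ 0` the factor `1 - m τ'/r` is at least `1`, and `τ'' ≤ 1`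
already. Where `τ' > 0`, the bound `s ≤ r` gives `1 - m τ'/r ≥ 1 - m τ'/s = m/u`, and
`(1 + τ'²) m/u - τ''` is a positive multiple of the quadratic
`(m² - 3m - 1) u² + (m² + 4m) u - m²`, which is nonnegative for `u ≥ 1` as soon as `m ≥ 4`.
-/

open Real

/-- `τ_{R*}(r) = modelAsymptotics (n - 1) (r - R*)`. -/
noncomputable def modelAsymptotics (m s : ℝ) : ℝ :=
  s ^ 2 / (2 * m) - 1 / 2 * log (1 + s ^ 2)

theorem hasDerivAt_modelAsymptotics (m s : ℝ) :
    HasDerivAt (modelAsymptotics m) (s / m - s / (1 + s ^ 2)) s := by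
  have hsq : HasDerivAt (fun y : ℝ => y ^ 2) (2 * s) s := by
    simpa using hasDerivAt_pow 2 s
  have hlog : HasDerivAt (fun y : ℝ => log (1 + y ^ 2)) (2 * s / (1 + s ^ 2)) s :=
    (hsq.const_add 1).log (by positivity)
  refine ((hsq.div_const (2 * m)).sub (hlog.const_mul (1 / 2))).congr_deriv ?_
  ring

theorem deriv_modelAsymptotics (m : ℝ) :
    deriv (modelAsymptotics m) = fun s => s / m - s / (1 + s ^ 2) :=
  funext fun s => (hasDerivAt_modelAsymptotics m s).deriv

theorem hasDerivAt_deriv_modelAsymptotics (m s : ℝ) :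
    HasDerivAt (deriv (modelAsymptotics m)) (1 / m - (1 - s ^ 2) / (1 + s ^ 2) ^ 2) s := by
  rw [deriv_modelAsymptotics]
  have hid : HasDerivAt (fun y : ℝ => y) 1 s := hasDerivAt_id s
  have hu : HasDerivAt (fun y : ℝ => 1 + y ^ 2) (2 * s) s := by
    simpa using (hasDerivAt_pow 2 s).const_add 1
  refine ((hid.div_const m).sub (hid.div hu (by positivity))).congr_deriv ?_
  field_simp
  ring

theorem one_div_sub_one_sub_sq_div_le_one {m : ℝ} (hm : 2 ≤ m) (s : ℝ) :
    1 / m - (1 - s ^ 2) / (1 + s ^ 2) ^ 2 ≤ 1 := by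
  have hhalf : 1 / m ≤ 1 / 2 := one_div_le_one_div_of_le two_pos hm
  have hquot : (s ^ 2 - 1) / (1 + s ^ 2) ^ 2 ≤ 1 / 2 := by
    rw [div_le_iff₀ (by positivity)]
    nlinarith [sq_nonneg (s ^ 2)]
  have hneg : (1 - s ^ 2) / (1 + s ^ 2) ^ 2 = -((s ^ 2 - 1) / (1 + s ^ 2) ^ 2) := by ring
  linarith

theorem one_div_sub_one_sub_sq_div_le_mul_div {m : ℝ} (hm : 4 ≤ m) (s : ℝ) :
    1 / m - (1 - s ^ 2) / (1 + s ^ 2) ^ 2 ≤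
      (1 + (s / m - s / (1 + s ^ 2)) ^ 2) * (m / (1 + s ^ 2)) := by
  set u := 1 + s ^ 2 with hu_def
  have hu : 1 ≤ u := by nlinarith [sq_nonneg s]
  have hm0 : 0 < m := by linarith
  have hquad : 0 ≤ (m ^ 2 - 3 * m - 1) * u ^ 2 + (m ^ 2 + 4 * m) * u - m ^ 2 := by
    have hlead : 0 ≤ m ^ 2 - 3 * m - 1 := by nlinarith
    nlinarith [mul_nonneg hlead (sq_nonneg u)]
  have hdiff : (1 + (s / m - s / u) ^ 2) * (m / u) - (1 / m - (1 - s ^ 2) / u ^ 2) =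
      ((m ^ 2 - 3 * m - 1) * u ^ 2 + (m ^ 2 + 4 * m) * u - m ^ 2) / (m * u ^ 3) := by
    rw [hu_def]
    field_simp
    ring
  have hpos : 0 ≤ ((m ^ 2 - 3 * m - 1) * u ^ 2 + (m ^ 2 + 4 * m) * u - m ^ 2) / (m * u ^ 3) :=
    div_nonneg hquad (by positivity)
  linarith

theorem modelAsymptotics_subsolution_ineq {m s r : ℝ} (hm : 4 ≤ m) (hs : 0 ≤ s) (hsr : s ≤ r) :
    1 / m - (1 - s ^ 2) / (1 + s ^ 2) ^ 2 ≤
      (1 + (s / m - s / (1 + s ^ 2)) ^ 2) * (1 - m * (s / m - s / (1 + s ^ 2)) / r) := by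
  set p := s / m - s / (1 + s ^ 2) with hp_def
  have hm0 : 0 < m := by linarith
  rcases le_or_gt p 0 with hp | hp
  · have hdecay : m * p / r ≤ 0 :=
      div_nonpos_of_nonpos_of_nonneg (mul_nonpos_of_nonneg_of_nonpos hm0.le hp) (hs.trans hsr)
    calc 1 / m - (1 - s ^ 2) / (1 + s ^ 2) ^ 2 ≤ 1 := one_div_sub_one_sub_sq_div_le_one (by linarith) s
      _ ≤ 1 + p ^ 2 := by nlinarith [sq_nonneg p]
      _ ≤ (1 + p ^ 2) * (1 - m * p / r) := by nlinarith [sq_nonneg p]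
  · have hs0 : 0 < s := by
      rcases hs.lt_or_eq with h | rfl
      · exact h
      · simp [hp_def] at hp
    have hslope : 1 - m * p / s = m / (1 + s ^ 2) := by
      rw [hp_def]; field_simp; ring
    have hfactor : m / (1 + s ^ 2) ≤ 1 - m * p / r := by
      rw [← hslope]
      linarith [div_le_div_of_nonneg_left (mul_pos hm0 hp).le hs0 hsr]
    calc 1 / m - (1 - s ^ 2) / (1 + s ^ 2) ^ 2 ≤ (1 + p ^ 2) * (m / (1 + s ^ 2)) :=
          one_div_sub_one_sub_sq_div_le_mul_div hm s
      _ ≤ (1 + p ^ 2) * (1 - m * p / r) := by gcongr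

/-- **The model asymptotics function is a subsolution in dimensions `n ≥ 5`.**
For `n ≥ 5`, `R* > 0` and `τ(r) = (r−R*)²/(2(n−1)) − (1/2)log(1+(r−R*)²)`, one has
`τ''(r) ≤ (1+τ'(r)²)(1 − (n−1)τ'(r)/r)` for all `r ≥ R*`. -/
theorem subsolution_high_dimension
    (n : ℕ) (hn : 5 ≤ n) (Rs : ℝ) (hRs : 0 < Rs)
    (τ : ℝ → ℝ)
    (hτ : ∀ r, τ r = (r - Rs) ^ 2 / (2 * ((n : ℝ) - 1))
        - (1 / 2) * Real.log (1 + (r - Rs) ^ 2)) :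
    ∀ r, Rs ≤ r →
      deriv (deriv τ) r ≤
        (1 + deriv τ r ^ 2) * (1 - ((n : ℝ) - 1) * deriv τ r / r) := by
  intro r hr
  have hτ_eq : τ = fun r => modelAsymptotics ((n : ℝ) - 1) (r - Rs) := funext hτ
  have hderiv : deriv τ = fun r => deriv (modelAsymptotics ((n : ℝ) - 1)) (r - Rs) := by
    rw [hτ_eq]; exact funext fun _ => deriv_comp_sub_const ..
  rw [hderiv, deriv_comp_sub_const, (hasDerivAt_deriv_modelAsymptotics _ _).deriv,
    deriv_modelAsymptotics]
  have hm : (4 : ℝ) ≤ n - 1 := by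
    have : (5 : ℝ) ≤ n := by exact_mod_cast hn
    linarith
  exact modelAsymptotics_subsolution_ineq hm (sub_nonneg.2 hr) (by linarith)
end

section
/- Let n ≥ 2 be an integer, λ > 1, and for R ≥ 0 let F_R ⊆ ℝ^{n+1} denote the solid parabolic funnel of aperture R, i.e. the set of points x = (x₁,…,x_{n+1}) such that, writing q = √(x₁²+⋯+x_n²), one has q ≥ R and f₋^R(q) ≤ x_{n+1} ≤ f₊(q), where f₊(q) = q²/(2(n−1)) + 1 and f₋^R(q) = (q−R−2)²/(2(n−1)) − (λ/2)·log(1 + (q−R−2)²) − (π(R+π/2)+4)/(2(n−1)). Then for every R₀ > 0 the set ⋃_{R ∈ [0,R₀]} F_R \ F_{R₀} is a bounded subset of ℝ^{n+1}; consequently its closure is compact. -/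
/-!
For `q ≥ R₀ + 2 + (n - 1) λ` the lower profiles are ordered, `f₋^{R₀}(q) ≤ f₋^R(q)` for
`R ≤ R₀`: the constant term of `f₋^R` grows with `R`, and `a ↦ a²/(2(n-1)) - (λ/2) log(1 + a²)`
is increasing once `1 + a² ≥ (n - 1) λ`. So `F_R ⊆ F_{R₀}` there, and points of
`⋃ F_R \ F_{R₀}` have `q` bounded; for bounded `q` the height `x_{n+1}` is squeezed between
bounded functions of `(R, q)`.
-/

open Set Bornology

lemma sq_div_sub_mul_log_le_of_le {m lam a b : ℝ} (hm : 0 < m) (hlam : 0 ≤ lam)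
    (ha : 0 ≤ a) (hmlam : m * lam ≤ 1 + a ^ 2) (hab : a ≤ b) :
    a ^ 2 / (2 * m) - lam / 2 * Real.log (1 + a ^ 2) ≤
      b ^ 2 / (2 * m) - lam / 2 * Real.log (1 + b ^ 2) := by
  have hpos : 0 < 1 + a ^ 2 := by positivity
  have hsq : a ^ 2 ≤ b ^ 2 := pow_le_pow_left₀ ha hab 2
  have hlog : Real.log (1 + b ^ 2) - Real.log (1 + a ^ 2) ≤ (b ^ 2 - a ^ 2) / (1 + a ^ 2) := by
    rw [← Real.log_div (by positivity) hpos.ne']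
    calc Real.log ((1 + b ^ 2) / (1 + a ^ 2)) ≤ (1 + b ^ 2) / (1 + a ^ 2) - 1 :=
          Real.log_le_sub_one_of_pos (by positivity)
      _ = (b ^ 2 - a ^ 2) / (1 + a ^ 2) := by field_simp; ring
  have hslope : lam / 2 * ((b ^ 2 - a ^ 2) / (1 + a ^ 2)) ≤ (b ^ 2 - a ^ 2) / (2 * m) := by
    rw [mul_div_assoc', div_le_div_iff₀ hpos (by positivity)]
    nlinarith [mul_le_mul_of_nonneg_right hmlam (sub_nonneg.mpr hsq)]
  have hlog_scaled := mul_le_mul_of_nonneg_left hlog (by positivity : 0 ≤ lam / 2)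
  have hsplit : (b ^ 2 - a ^ 2) / (2 * m) = b ^ 2 / (2 * m) - a ^ 2 / (2 * m) := sub_div _ _ _
  linarith

noncomputable def funnelLower (m lam R s : ℝ) : ℝ :=
  (s - R - 2) ^ 2 / (2 * m) - (lam / 2) * Real.log (1 + (s - R - 2) ^ 2)
    - (Real.pi * (R + Real.pi / 2) + 4) / (2 * m)

/-- The meridian section of the funnel: `F_R` is the preimage of
this set for `m = n - 1` under `x ↦ (q x, x_{n+1})`. -/
def funnelProfile (m lam R : ℝ) : Set (ℝ × ℝ) :=
  {p | R ≤ p.1 ∧ funnelLower m lam R p.1 ≤ p.2 ∧ p.2 ≤ p.1 ^ 2 / (2 * m) + 1}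

section
variable {m lam : ℝ}

lemma funnelLower_le_funnelLower_of_le (hm : 0 < m) (hlam : 0 ≤ lam) {R R₀ s : ℝ}
    (hR : R ≤ R₀) (hs : R₀ + 2 + m * lam ≤ s) :
    funnelLower m lam R₀ s ≤ funnelLower m lam R s := by
  have hmlam : 0 ≤ m * lam := by positivity
  -- `a := s - R₀ - 2 ≥ m λ`, hence `m λ ≤ a ≤ 1 + a²`.
  have hmono := sq_div_sub_mul_log_le_of_le hm hlam (a := s - R₀ - 2) (b := s - R - 2)
    (by linarith) (by nlinarith) (by linarith)
  have hconst : (Real.pi * (R + Real.pi / 2) + 4) / (2 * m)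
      ≤ (Real.pi * (R₀ + Real.pi / 2) + 4) / (2 * m) := by
    gcongr
  unfold funnelLower
  linarith

lemma fst_lt_of_mem_funnelProfile_of_notMem (hm : 0 < m) (hlam : 0 ≤ lam) {R R₀ : ℝ}
    {p : ℝ × ℝ} (hR : R ≤ R₀) (hp : p ∈ funnelProfile m lam R)
    (hp₀ : p ∉ funnelProfile m lam R₀) : p.1 < R₀ + 2 + m * lam := by
  by_contra! hs
  obtain ⟨-, hlo, hhi⟩ := hp
  exact hp₀ ⟨by linarith [mul_nonneg hm.le hlam],
    (funnelLower_le_funnelLower_of_le hm hlam hR hs).trans hlo, hhi⟩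

lemma le_funnelLower (hm : 0 < m) (hlam : 0 ≤ lam) {R R₀ M s : ℝ} (hR : 0 ≤ R) (hRR₀ : R ≤ R₀)
    (hRs : R ≤ s) (hsM : s ≤ M) :
    -(lam / 2 * Real.log (1 + (M + 2) ^ 2) + (Real.pi * (R₀ + Real.pi / 2) + 4) / (2 * m))
      ≤ funnelLower m lam R s := by
  have hsq : (s - R - 2) ^ 2 ≤ (M + 2) ^ 2 := sq_le_sq' (by linarith) (by linarith)
  have hlog : Real.log (1 + (s - R - 2) ^ 2) ≤ Real.log (1 + (M + 2) ^ 2) :=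
    Real.log_le_log (by positivity) (by linarith)
  have hconst : (Real.pi * (R + Real.pi / 2) + 4) / (2 * m)
      ≤ (Real.pi * (R₀ + Real.pi / 2) + 4) / (2 * m) := by
    gcongr
  have hlog_scaled := mul_le_mul_of_nonneg_left hlog (by positivity : 0 ≤ lam / 2)
  have hquad : 0 ≤ (s - R - 2) ^ 2 / (2 * m) := by positivity
  unfold funnelLower
  linarith

lemma isBounded_biUnion_funnelProfile_diff (hm : 0 < m) (hlam : 0 ≤ lam) (R₀ : ℝ) :
    IsBounded ((⋃ R ∈ Icc 0 R₀, funnelProfile m lam R) \ funnelProfile m lam R₀) := by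
  set M := R₀ + 2 + m * lam
  set L := -(lam / 2 * Real.log (1 + (M + 2) ^ 2) + (Real.pi * (R₀ + Real.pi / 2) + 4) / (2 * m))
  refine (Metric.isBounded_Icc ((0 : ℝ), L) (M, M ^ 2 / (2 * m) + 1)).subset ?_
  rintro p ⟨hp, hp₀⟩
  obtain ⟨R, ⟨hR, hRR₀⟩, hpR⟩ := mem_iUnion₂.mp hp
  have hsM := (fst_lt_of_mem_funnelProfile_of_notMem hm hlam hRR₀ hpR hp₀).le
  obtain ⟨hRs, hlo, hhi⟩ := hpR
  have hs : 0 ≤ p.1 := hR.trans hRs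
  refine ⟨⟨hs, (le_funnelLower hm hlam hR hRR₀ hRs hsM).trans hlo⟩, hsM, hhi.trans ?_⟩
  show _ ≤ M ^ 2 / (2 * m) + 1
  gcongr

end

lemma norm_le_two_mul_norm_sqrt_sum_castSucc_last {n : ℕ} (x : EuclideanSpace ℝ (Fin (n + 1))) :
    ‖x‖ ≤ 2 * ‖(Real.sqrt (∑ i : Fin n, x i.castSucc ^ 2), x (Fin.last n))‖ := by
  set q := Real.sqrt (∑ i : Fin n, x i.castSucc ^ 2)
  set t := x (Fin.last n)
  have hq : q ^ 2 = ∑ i : Fin n, x i.castSucc ^ 2 := Real.sq_sqrt (by positivity)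
  have hnorm : ‖x‖ ^ 2 = q ^ 2 + t ^ 2 := by
    rw [EuclideanSpace.real_norm_sq_eq, Fin.sum_univ_castSucc, hq]
  have hq' : |q| ≤ ‖(q, t)‖ := le_max_left _ _
  have ht' : |t| ≤ ‖(q, t)‖ := le_max_right _ _
  refine (pow_le_pow_iff_left₀ (norm_nonneg x) (by positivity) two_ne_zero).mp ?_
  rw [hnorm, ← sq_abs q, ← sq_abs t]
  nlinarith [abs_nonneg q, abs_nonneg t]

lemma Bornology.IsBounded.preimage_of_norm_le {E F : Type*} [SeminormedAddCommGroup E]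
    [SeminormedAddCommGroup F] {f : E → F} {c : ℝ} (hf : ∀ x, ‖x‖ ≤ c * ‖f x‖) {s : Set F}
    (hs : IsBounded s) : IsBounded (f ⁻¹' s) := by
  obtain ⟨C, hC⟩ := isBounded_iff_forall_norm_le.mp hs
  refine isBounded_iff_forall_norm_le.mpr ⟨|c| * C, fun x hx => ?_⟩
  calc ‖x‖ ≤ c * ‖f x‖ := hf x
    _ ≤ |c| * ‖f x‖ := by gcongr; exact le_abs_self c
    _ ≤ |c| * C := by gcongr; exact hC _ hx

/-- **Compactness property of the family of parabolic funnels.**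
For `n ≥ 2` and `λ > 1`, let `F R ⊆ ℝ^{n+1}` be the solid parabolic funnel of
aperture `R`: the set of `x` with `q ≥ R` and `f₋^R(q) ≤ x_{n+1} ≤ f₊(q)`, where
`q = √(x₁²+⋯+x_n²)`, `f₊(q) = q²/(2(n−1)) + 1` and
`f₋^R(q) = (q−R−2)²/(2(n−1)) − (λ/2)log(1+(q−R−2)²) − (π(R+π/2)+4)/(2(n−1))`.
Then for every `R₀ > 0` the set `⋃_{R ∈ [0,R₀]} F R \ F R₀` is bounded, and hence
its closure is compact. -/
theorem funnel_family_compactness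
    (n : ℕ) (hn : 2 ≤ n) (lam : ℝ) (hlam : 1 < lam)
    (q : EuclideanSpace ℝ (Fin (n + 1)) → ℝ)
    (hq : ∀ x, q x = Real.sqrt (∑ i : Fin n, x (Fin.castSucc i) ^ 2))
    (fplus : ℝ → ℝ) (hfplus : ∀ s, fplus s = s ^ 2 / (2 * ((n : ℝ) - 1)) + 1)
    (fminus : ℝ → ℝ → ℝ)
    (hfminus : ∀ R s, fminus R s =
      (s - R - 2) ^ 2 / (2 * ((n : ℝ) - 1))
        - (lam / 2) * Real.log (1 + (s - R - 2) ^ 2)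
        - (Real.pi * (R + Real.pi / 2) + 4) / (2 * ((n : ℝ) - 1)))
    (F : ℝ → Set (EuclideanSpace ℝ (Fin (n + 1))))
    (hF : ∀ R, F R = {x | R ≤ q x ∧ fminus R (q x) ≤ x (Fin.last n) ∧
      x (Fin.last n) ≤ fplus (q x)}) :
    ∀ R₀ : ℝ, 0 < R₀ →
      Bornology.IsBounded ((⋃ R ∈ Set.Icc (0 : ℝ) R₀, F R) \ F R₀) ∧
      IsCompact (closure ((⋃ R ∈ Set.Icc (0 : ℝ) R₀, F R) \ F R₀)) := by
  intro R₀ _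
  have hm : (0 : ℝ) < n - 1 := by
    have hn' : (2 : ℝ) ≤ n := by exact_mod_cast hn
    linarith
  let φ : EuclideanSpace ℝ (Fin (n + 1)) → ℝ × ℝ := fun x => (q x, x (Fin.last n))
  have hFφ : ∀ R, F R = φ ⁻¹' funnelProfile (n - 1) lam R := fun R => by
    ext x
    simp only [hF, hfminus, hfplus, funnelProfile, funnelLower, mem_ofPred_eq, mem_preimage, φ]
  have hB : IsBounded ((⋃ R ∈ Icc (0 : ℝ) R₀, F R) \ F R₀) := by
    simp only [hFφ, ← preimage_iUnion₂, ← preimage_sdiff]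
    refine (isBounded_biUnion_funnelProfile_diff hm (by linarith) R₀).preimage_of_norm_le
      (c := 2) fun x => ?_
    simpa only [φ, hq] using norm_le_two_mul_norm_sqrt_sum_castSucc_last x
  exact ⟨hB, hB.isCompact_closure⟩
end

section
/- Let n ≥ 2 be an integer, let 0 ≤ R < R*, and let φ : (R, R*] → ℝ be differentiable and satisfy the translator profile ODE φ'(r) = (1+φ(r)²)(1 − (n−1)φ(r)/r) for all r ∈ (R, R*], with φ(r) ≤ 0 for all r ∈ (R, R*]. Then R* − R ≤ π/2. -/
/-! Along a solution of `φ' = (1 + φ²) F`, the angle `arctan φ` has derivative `F`. For the translator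
ODE with `φ ≤ 0` we have `F = 1 − (n−1)φ/r ≥ 1`, so the angle grows at least as fast as `r`; since it
starts above `−π/2` and ends at most `0`, the interval has length at most `π/2`. -/

open Real Set

theorem hasDerivAt_arctan_of_hasDerivAt_one_add_sq_mul {f : ℝ → ℝ} {F x : ℝ}
    (hf : HasDerivAt f ((1 + f x ^ 2) * F) x) : HasDerivAt (fun y => arctan (f y)) F x := by
  have hpos : (1 : ℝ) + f x ^ 2 ≠ 0 := by positivity
  convert hf.arctan using 1
  field_simp

theorem sub_le_arctan_sub_arctan_of_hasDerivAt {f F : ℝ → ℝ} {a b : ℝ} (hab : a ≤ b)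
    (hf : ∀ x ∈ Icc a b, HasDerivAt f ((1 + f x ^ 2) * F x) x)
    (hF : ∀ x ∈ Icc a b, 1 ≤ F x) :
    b - a ≤ arctan (f b) - arctan (f a) := by
  have hderiv : ∀ x ∈ Icc a b, HasDerivAt (fun y => arctan (f y) - y) (F x - 1) x :=
    fun x hx => (hasDerivAt_arctan_of_hasDerivAt_one_add_sq_mul (hf x hx)).sub (hasDerivAt_id x)
  have hmono : MonotoneOn (fun y => arctan (f y) - y) (Icc a b) := by
    refine monotoneOn_of_hasDerivWithinAt_nonneg (f' := fun x => F x - 1) (convex_Icc a b)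
      (fun x hx => (hderiv x hx).continuousAt.continuousWithinAt) (fun x hx => ?_)
      (fun x hx => ?_)
    · exact (hderiv x (interior_subset hx)).hasDerivWithinAt
    · exact sub_nonneg.2 (hF x (interior_subset hx))
  have := hmono (left_mem_Icc.2 hab) (right_mem_Icc.2 hab) hab
  linarith

theorem winglike_neck_radius_bound_general
    (n : ℕ) (hn : 2 ≤ n) (R Rs : ℝ) (hR : 0 ≤ R) (φ : ℝ → ℝ)
    (hode : ∀ r, r ∈ Set.Ioc R Rs →
      HasDerivAt φ ((1 + φ r ^ 2) * (1 - ((n : ℝ) - 1) * φ r / r)) r)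
    (hφneg : ∀ r, r ∈ Set.Ioc R Rs → φ r ≤ 0) :
    Rs - R ≤ Real.pi / 2 := by
  by_contra! hlong
  -- a compact interval inside `(R, Rs]`, avoiding the endpoint `R` where the ODE is not assumed
  set a := Rs - π / 2 with ha
  have hsub : Icc a Rs ⊆ Ioc R Rs := fun x hx => ⟨by linarith [hx.1], hx.2⟩
  have hF : ∀ x ∈ Icc a Rs, 1 ≤ 1 - ((n : ℝ) - 1) * φ x / x := by
    intro x hx
    have hn1 : (0 : ℝ) ≤ (n : ℝ) - 1 := by
      have : (2 : ℝ) ≤ n := by exact_mod_cast hn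
      linarith
    have : ((n : ℝ) - 1) * φ x / x ≤ 0 :=
      div_nonpos_of_nonpos_of_nonneg (mul_nonpos_of_nonneg_of_nonpos hn1 (hφneg x (hsub hx)))
        (by linarith [(hsub hx).1])
    linarith
  have hangle := sub_le_arctan_sub_arctan_of_hasDerivAt (by linarith [pi_pos] : a ≤ Rs)
    (fun x hx => hode x (hsub hx)) hF
  have hend : arctan (φ Rs) ≤ 0 :=
    arctan_le_zero.2 (hφneg Rs (hsub (right_mem_Icc.2 (by linarith [pi_pos]))))
  linarith [neg_pi_div_two_lt_arctan (φ a)]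

/-- **Bound on the radius where the winglike profile turns vertical.**
If `φ` solves `φ'(r) = (1+φ(r)²)(1 − (n−1)φ(r)/r)` on `(R, R*]` with `0 ≤ R < R*`
and `φ ≤ 0` on `(R, R*]`, then `R* − R ≤ π/2`. -/
theorem winglike_neck_radius_bound
    (n : ℕ) (hn : 2 ≤ n) (R Rs : ℝ) (hR : 0 ≤ R) (hRRs : R < Rs) (φ : ℝ → ℝ)
    (hode : ∀ r, r ∈ Set.Ioc R Rs →
      HasDerivAt φ ((1 + φ r ^ 2) * (1 - ((n : ℝ) - 1) * φ r / r)) r)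
    (hφneg : ∀ r, r ∈ Set.Ioc R Rs → φ r ≤ 0) :
    Rs - R ≤ Real.pi / 2 :=
  winglike_neck_radius_bound_general n hn R Rs hR φ hode hφneg
end

section
/- Let n ≥ 2 be an integer, d > 0, R* > 0, and let η : [0,d] → ℝ be twice differentiable with 0 < η(x) ≤ R* for all x ∈ [0,d], η'(0) = 0, η'(x) ≥ 0 for all x ∈ [0,d], and satisfying η''(x) = (1+η'(x)²)·(η'(x) + (n−1)/η(x)) for all x ∈ [0,d]. Then d ≤ (π/2)·R*/(n−1). -/
/-!
The slope `η'` satisfies the Riccati-type equation `η'' = (1 + η'²) v` with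
`v = η' + (n-1)/η ≥ (n-1)/R*`, so `arctan η'` grows at least at the rate `(n-1)/R*`.
Starting from `arctan η'(0) = 0` and staying below `π/2`, it can do so only for a depth
`d < (π/2)·R*/(n-1)`.
-/

open Real Set

theorem HasDerivAt.arctan_of_eq_one_add_sq_mul {u : ℝ → ℝ} {v x : ℝ}
    (hu : HasDerivAt u ((1 + u x ^ 2) * v) x) :
    HasDerivAt (fun y => Real.arctan (u y)) v x := by
  convert hu.arctan using 1
  field_simp

theorem mul_sub_lt_pi_div_two_sub_arctan {u v : ℝ → ℝ} {a b c : ℝ} (hab : a ≤ b)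
    (hu : ∀ x ∈ Icc a b, HasDerivAt u ((1 + u x ^ 2) * v x) x)
    (hv : ∀ x ∈ Icc a b, c ≤ v x) :
    c * (b - a) < π / 2 - arctan (u a) := by
  have harctan : ∀ x ∈ Icc a b, HasDerivAt (fun y => arctan (u y)) (v x) x :=
    fun x hx => HasDerivAt.arctan_of_eq_one_add_sq_mul (hu x hx)
  have hgrowth : c * (b - a) ≤ arctan (u b) - arctan (u a) :=
    (convex_Icc a b).mul_sub_le_image_sub_of_le_deriv
      (fun x hx => (harctan x hx).continuousAt.continuousWithinAt)
      (fun x hx => (harctan x (interior_subset hx)).differentiableAt.differentiableWithinAt)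
      (fun x hx => (harctan x (interior_subset hx)).deriv ▸ hv x (interior_subset hx))
      a (left_mem_Icc.2 hab) b (right_mem_Icc.2 hab) hab
  linarith [arctan_lt_pi_div_two (u b)]

theorem winglike_lower_branch_depth_bound_general
    (n : ℕ) (hn : 2 ≤ n) (d Rs : ℝ) (hd : 0 < d) (hRs : 0 < Rs)
    (η η' : ℝ → ℝ)
    (hbound : ∀ x, x ∈ Set.Icc 0 d → 0 < η x ∧ η x ≤ Rs)
    (hode : ∀ x, x ∈ Set.Icc 0 d →
      HasDerivAt η' ((1 + η' x ^ 2) * (η' x + ((n : ℝ) - 1) / η x)) x)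
    (hη'0 : η' 0 = 0)
    (hη'nonneg : ∀ x, x ∈ Set.Icc 0 d → 0 ≤ η' x) :
    d ≤ Real.pi / 2 * Rs / ((n : ℝ) - 1) := by
  have hn1 : (0 : ℝ) < (n : ℝ) - 1 := by
    have : (2 : ℝ) ≤ n := by exact_mod_cast hn
    linarith
  have hrate : ∀ x ∈ Icc 0 d, ((n : ℝ) - 1) / Rs ≤ η' x + ((n : ℝ) - 1) / η x := by
    intro x hx
    have := div_le_div_of_nonneg_left hn1.le (hbound x hx).1 (hbound x hx).2
    linarith [hη'nonneg x hx]
  have hdepth := mul_sub_lt_pi_div_two_sub_arctan hd.le hode hrate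
  rw [hη'0, arctan_zero, sub_zero, sub_zero, div_mul_eq_mul_div, div_lt_iff₀ hRs] at hdepth
  rw [le_div_iff₀ hn1]
  linarith

/-- **Depth bound for the lower branch of a winglike translator.**
If `η` solves `η''(x) = (1+η'(x)²)(η'(x) + (n−1)/η(x))` on `[0, d]` with
`0 < η ≤ R*`, `η'(0) = 0` and `η' ≥ 0` on `[0, d]`, then `d ≤ (π/2)·R*/(n−1)`. -/
theorem winglike_lower_branch_depth_bound
    (n : ℕ) (hn : 2 ≤ n) (d Rs : ℝ) (hd : 0 < d) (hRs : 0 < Rs)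
    (η η' : ℝ → ℝ)
    (hbound : ∀ x, x ∈ Set.Icc 0 d → 0 < η x ∧ η x ≤ Rs)
    (hη : ∀ x, x ∈ Set.Icc 0 d → HasDerivAt η (η' x) x)
    (hode : ∀ x, x ∈ Set.Icc 0 d →
      HasDerivAt η' ((1 + η' x ^ 2) * (η' x + ((n : ℝ) - 1) / η x)) x)
    (hη'0 : η' 0 = 0)
    (hη'nonneg : ∀ x, x ∈ Set.Icc 0 d → 0 ≤ η' x) :
    d ≤ Real.pi / 2 * Rs / ((n : ℝ) - 1) :=
  winglike_lower_branch_depth_bound_general n hn d Rs hd hRs η η' hbound hode hη'0 hη'nonneg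
end
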